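/- arXiv:2210.15992 — 9 statements merged into one kernel-verified Lean document; each statement's English description precedes it below -/
import Mathlib

section
/- If u: I → ℝ is a C⁴ function of one variable and w = u', then the graph {(x, y, u(x))} satisfies the Willmore graphic equation div((1/v)((Id - ∇u⊗∇u/v²)∇(vH) - (1/2)H²∇u)) = 0 (with v = √(1+|∇u|²), H = div(∇u/v)) if and only if d/dx [ (w''(1+w²) - (5/2)w(w')²) / (1+w²)^{7/2} ] = 0 on I. -/
/-!
The curvature is `H = w' / v³`, so `v H = w' / (1 + w²)`; substituting this into `Φ` and using
`v² = 1 + w²` collapses `Φ` to `Ψ` pointwise on `I`. As `I` is open, `Φ` and `Ψ` then have the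
same derivative there.
-/

open Set

section GraphCurvature

variable {f f' : ℝ → ℝ} {x b : ℝ}

theorem HasDerivAt.one_add_sq (hf : HasDerivAt f b x) :
    HasDerivAt (fun t => 1 + f t ^ 2) (2 * f x * b) x := by
  simpa [mul_comm, mul_assoc, mul_left_comm] using (hf.pow 2).const_add 1

theorem HasDerivAt.sqrt_one_add_sq (hf : HasDerivAt f b x) :
    HasDerivAt (fun t => √(1 + f t ^ 2)) (f x * b / √(1 + f x ^ 2)) x := by
  convert hf.one_add_sq.sqrt (by positivity) using 1
  ring

theorem HasDerivAt.div_sqrt_one_add_sq (hf : HasDerivAt f b x) :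
    HasDerivAt (fun t => f t / √(1 + f t ^ 2)) (b / √(1 + f x ^ 2) ^ 3) x := by
  have hv : 0 < √(1 + f x ^ 2) := by positivity
  have hsq : √(1 + f x ^ 2) ^ 2 = 1 + f x ^ 2 := Real.sq_sqrt (by positivity)
  refine (hf.fun_div hf.sqrt_one_add_sq hv.ne').congr_deriv ?_
  field_simp
  linear_combination b * hsq

theorem hasDerivAt_sqrt_one_add_sq_mul_deriv_div {I : Set ℝ} (hI : IsOpen I)
    (hf : ∀ y ∈ I, HasDerivAt f (f' y) y) (hf' : HasDerivAt f' b x) (hx : x ∈ I) :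
    HasDerivAt (fun y => √(1 + f y ^ 2) * deriv (fun t => f t / √(1 + f t ^ 2)) y)
      ((b * (1 + f x ^ 2) - f' x * (2 * f x * f' x)) / (1 + f x ^ 2) ^ 2) x := by
  refine (hf'.fun_div (hf x hx).one_add_sq (by positivity)).congr_of_eventuallyEq ?_
  filter_upwards [hI.mem_nhds hx] with y hy
  have hv : 0 < √(1 + f y ^ 2) := by positivity
  have hsq : √(1 + f y ^ 2) ^ 2 = 1 + f y ^ 2 := Real.sq_sqrt (by positivity)
  rw [(hf y hy).div_sqrt_one_add_sq.deriv]
  field_simp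
  rw [hsq]

end GraphCurvature

theorem willmore_flux_cylinder_eq (a b c : ℝ) :
    1 / √(1 + a ^ 2) * ((1 - a ^ 2 / √(1 + a ^ 2) ^ 2)
        * ((c * (1 + a ^ 2) - b * (2 * a * b)) / (1 + a ^ 2) ^ 2)
      - 1 / 2 * (b / √(1 + a ^ 2) ^ 3) ^ 2 * a)
      = (c * (1 + a ^ 2) - 5 / 2 * a * b ^ 2) / (1 + a ^ 2) ^ ((7 : ℝ) / 2) := by
  have hpos : (0 : ℝ) < 1 + a ^ 2 := by positivity
  have h7 : (1 + a ^ 2) ^ ((7 : ℝ) / 2) = √(1 + a ^ 2) ^ 7 := by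
    rw [Real.sqrt_eq_rpow, ← Real.rpow_natCast ((1 + a ^ 2) ^ ((1 : ℝ) / 2)) 7,
      ← Real.rpow_mul hpos.le]
    norm_num
  have hsq : √(1 + a ^ 2) ^ 2 = 1 + a ^ 2 := Real.sq_sqrt hpos.le
  have hv : 0 < √(1 + a ^ 2) := Real.sqrt_pos.2 hpos
  rw [h7]
  set v := √(1 + a ^ 2)
  rw [← hsq]
  field_simp
  linear_combination (2 * c * v ^ 2 - 4 * a * b ^ 2) * hsq

theorem deriv_eq_zero_iff_of_eqOn {𝕜 F : Type*} [NontriviallyNormedField 𝕜]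
    [NormedAddCommGroup F] [NormedSpace 𝕜 F] {I : Set 𝕜} (hI : IsOpen I) {f g : 𝕜 → F}
    (h : EqOn f g I) :
    (∀ x ∈ I, deriv f x = 0) ↔ (∀ x ∈ I, deriv g x = 0) := by
  refine forall₂_congr fun x hx => ?_
  rw [(h.eventuallyEq_of_mem (hI.mem_nhds hx)).deriv_eq]

/-- For a C⁴ function `u` of one variable with `w = u'`, the cylinder graph
`{(x, y, u(x))}` satisfies the Willmore graphic equation
`div((1/v)((Id - ∇u⊗∇u/v²)∇(vH) - (1/2)H²∇u)) = 0` (with `v = √(1+|∇u|²)`, `H = div(∇u/v)`,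
which for `u(x,y) = u(x)` reduces to the one-variable expression `Φ` below) if and only if
`d/dx [ (w''(1+w²) - (5/2)w(w')²) / (1+w²)^{7/2} ] = 0` on `I`. -/
theorem stmt0 (I : Set ℝ) (hI : IsOpen I) (u : ℝ → ℝ) (hu : ContDiffOn ℝ 4 u I)
    (w v H Φ Ψ : ℝ → ℝ)
    (hw : w = deriv u)
    (hv : ∀ x, v x = Real.sqrt (1 + (w x) ^ 2))
    (hH : ∀ x, H x = deriv (fun y => w y / v y) x)
    -- the vector field `(1/v)((Id - ∇u⊗∇u/v²)∇(vH) - (1/2)H²∇u)` points in the `x`-direction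
    -- with component `Φ`, so its divergence is `Φ'`:
    (hΦ : ∀ x, Φ x = (1 / v x) * ((1 - (w x) ^ 2 / (v x) ^ 2) * deriv (fun y => v y * H y) x
      - (1 / 2) * (H x) ^ 2 * w x))
    (hΨ : ∀ x, Ψ x = (deriv (deriv w) x * (1 + (w x) ^ 2) - (5 / 2) * w x * (deriv w x) ^ 2)
      / (1 + (w x) ^ 2) ^ ((7 : ℝ) / 2)) :
    (∀ x ∈ I, deriv Φ x = 0) ↔ (∀ x ∈ I, deriv Ψ x = 0) := by
  obtain rfl : v = fun x => √(1 + w x ^ 2) := funext hv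
  obtain rfl : H = fun x => deriv (fun y => w y / √(1 + w y ^ 2)) x := funext hH
  have hw3 : ContDiffOn ℝ 3 w I := hw ▸ hu.deriv_of_isOpen hI (by norm_num)
  have hw2 : ContDiffOn ℝ 2 (deriv w) I := hw3.deriv_of_isOpen hI (by norm_num)
  have hdw : ∀ y ∈ I, HasDerivAt w (deriv w y) y := fun y hy =>
    (hw3.differentiableOn (by norm_num)).hasDerivAt (hI.mem_nhds hy)
  have hddw : ∀ y ∈ I, HasDerivAt (deriv w) (deriv (deriv w) y) y := fun y hy =>
    (hw2.differentiableOn (by norm_num)).hasDerivAt (hI.mem_nhds hy)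
  refine deriv_eq_zero_iff_of_eqOn hI fun x hx => ?_
  beta_reduce at hΦ
  rw [hΦ, hΨ, (hasDerivAt_sqrt_one_add_sq_mul_deriv_div hI hdw (hddw x hx) hx).deriv,
    (hdw x hx).div_sqrt_one_add_sq.deriv]
  exact willmore_flux_cylinder_eq _ _ _
end

section
/- If w: ℝ → ℝ is a C² solution on all of ℝ of w''(1+w²) - (5/2)w(w')² = C(1+w²)^{7/2} for some constant C, then w is constant (and hence C = 0). -/
/-!
With `P = 1 + w²`, the ODE says exactly that `g = w' P^(-5/4)` has derivative `C P^(5/4)`, so `g`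
is monotone or antitone according to the sign of `C`. On the other hand `g` is the derivative of
`G = F ∘ w`, where `F` is a primitive of `(1 + s²)^(-5/4) ≤ (1 + s²)⁻¹`, so `|G| ≤ π / 2`. A function
with monotone derivative lies above its tangent lines, so it can only be bounded above on `ℝ` if its
derivative vanishes. Hence `g = 0`, which forces both `w' = 0` and `C = 0`.
-/

open Real Set

section MonotoneDerivative

variable {G g : ℝ → ℝ}

theorem add_mul_sub_le_of_hasDerivAt_of_monotone (hG : ∀ x, HasDerivAt G (g x) x)
    (hg : Monotone g) (a x : ℝ) : G a + g a * (x - a) ≤ G x := by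
  have hcont : Continuous G := continuous_iff_continuousAt.2 fun y => (hG y).continuousAt
  rcases lt_trichotomy x a with hxa | rfl | hax
  · obtain ⟨c, hc, hslope⟩ :=
      exists_hasDerivAt_eq_slope G g hxa hcont.continuousOn fun y _ => hG y
    rw [eq_div_iff (sub_ne_zero.2 hxa.ne')] at hslope
    nlinarith [hg hc.2.le]
  · simp
  · obtain ⟨c, hc, hslope⟩ :=
      exists_hasDerivAt_eq_slope G g hax hcont.continuousOn fun y _ => hG y
    rw [eq_div_iff (sub_ne_zero.2 hax.ne')] at hslope
    nlinarith [hg hc.1.le]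

theorem eq_zero_of_hasDerivAt_of_monotone_of_bddAbove (hG : ∀ x, HasDerivAt G (g x) x)
    (hg : Monotone g) (hbdd : BddAbove (range G)) (a : ℝ) : g a = 0 := by
  obtain ⟨M, hM⟩ := hbdd
  by_contra hne
  have h := (add_mul_sub_le_of_hasDerivAt_of_monotone hG hg a (a + (M - G a + 1) / g a)).trans
    (hM (mem_range_self _))
  rw [add_sub_cancel_left, mul_div_cancel₀ _ hne] at h
  linarith

theorem eq_zero_of_hasDerivAt_of_antitone_of_bddBelow (hG : ∀ x, HasDerivAt G (g x) x)
    (hg : Antitone g) (hbdd : BddBelow (range G)) (a : ℝ) : g a = 0 := by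
  obtain ⟨M, hM⟩ := hbdd
  have hbdd' : BddAbove (range fun x => -G x) := ⟨-M, by
    rintro _ ⟨x, rfl⟩
    exact neg_le_neg (hM (mem_range_self x))⟩
  exact neg_eq_zero.1 <|
    eq_zero_of_hasDerivAt_of_monotone_of_bddAbove (fun x => (hG x).neg) hg.neg hbdd' a

end MonotoneDerivative

theorem continuous_one_add_sq_rpow (p : ℝ) : Continuous fun s : ℝ => (1 + s ^ 2) ^ p :=
  .rpow_const (by fun_prop) fun s => Or.inl (by positivity)

theorem hasDerivAt_integral_one_add_sq_rpow (p t : ℝ) :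
    HasDerivAt (fun t => ∫ s in (0 : ℝ)..t, (1 + s ^ 2) ^ p) ((1 + t ^ 2) ^ p) t :=
  ((continuous_one_add_sq_rpow p).integral_hasStrictDerivAt 0 t).hasDerivAt

theorem abs_integral_one_add_sq_rpow_neg_le {p : ℝ} (hp : 1 ≤ p) (t : ℝ) :
    |∫ s in (0 : ℝ)..t, (1 + s ^ 2) ^ (-p)| ≤ π / 2 := by
  have hle : ∀ s : ℝ, ‖(1 + s ^ 2) ^ (-p)‖ ≤ (1 + s ^ 2)⁻¹ := fun s => by
    rw [Real.norm_of_nonneg (by positivity), ← Real.rpow_neg_one]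
    exact Real.rpow_le_rpow_of_exponent_le (by nlinarith [sq_nonneg s]) (by linarith)
  have hint : IntervalIntegrable (fun s : ℝ => (1 + s ^ 2)⁻¹) MeasureTheory.volume 0 t := by simp
  calc |∫ s in (0 : ℝ)..t, (1 + s ^ 2) ^ (-p)|
      ≤ |∫ s in (0 : ℝ)..t, (1 + s ^ 2)⁻¹| :=
        intervalIntegral.norm_integral_le_abs_of_norm_le (.of_forall hle) hint
    _ = |arctan t| := by rw [integral_inv_one_add_sq, arctan_zero, sub_zero]
    _ ≤ π / 2 := (abs_lt.2 ⟨neg_pi_div_two_lt_arctan t, arctan_lt_pi_div_two t⟩).le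

/-- `(v P^(-5/4))' = P^(-9/4) (v' P - (5/2) u v²)` for `P = 1 + u²`, and `7/2 - 9/4 = 5/4`. -/
theorem hasDerivAt_mul_one_add_sq_rpow_of_ode {u v : ℝ → ℝ} {x a C : ℝ}
    (hu : HasDerivAt u (v x) x) (hv : HasDerivAt v a x)
    (hode : a * (1 + u x ^ 2) - 5 / 2 * u x * v x ^ 2 = C * (1 + u x ^ 2) ^ ((7 : ℝ) / 2)) :
    HasDerivAt (fun y => v y * (1 + u y ^ 2) ^ (-(5 / 4 : ℝ)))
      (C * (1 + u x ^ 2) ^ ((5 : ℝ) / 4)) x := by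
  have hP : 0 < 1 + u x ^ 2 := by positivity
  have hPu : HasDerivAt (fun y => 1 + u y ^ 2) (2 * u x * v x) x := by
    simpa using (hu.pow 2).const_add 1
  refine (hv.mul (hPu.rpow_const (p := -(5 / 4 : ℝ)) (Or.inl hP.ne'))).congr_deriv ?_
  have e1 : (1 + u x ^ 2) ^ (-(5 / 4 : ℝ)) = (1 + u x ^ 2) * (1 + u x ^ 2) ^ (-(9 / 4 : ℝ)) := by
    rw [← Real.rpow_one_add' hP.le (by norm_num)]; norm_num
  have e2 : (1 + u x ^ 2) ^ ((7 : ℝ) / 2) * (1 + u x ^ 2) ^ (-(9 / 4 : ℝ))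
      = (1 + u x ^ 2) ^ ((5 : ℝ) / 4) := by
    rw [← Real.rpow_add hP]; norm_num
  rw [e1, show -(5 / 4 : ℝ) - 1 = -(9 / 4 : ℝ) by norm_num]
  linear_combination (1 + u x ^ 2) ^ (-(9 / 4 : ℝ)) * hode + C * e2

/-- If `w : ℝ → ℝ` is a C² solution on all of `ℝ` of
`w''(1+w²) - (5/2)w(w')² = C(1+w²)^{7/2}`, then `w` is constant (and hence `C = 0`). -/
theorem stmt2 (w : ℝ → ℝ) (C : ℝ) (hw : ContDiff ℝ 2 w)
    (hode : ∀ x : ℝ, deriv (deriv w) x * (1 + (w x) ^ 2)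
      - (5 / 2) * w x * (deriv w x) ^ 2 = C * (1 + (w x) ^ 2) ^ ((7 : ℝ) / 2)) :
    (∃ c : ℝ, ∀ x : ℝ, w x = c) ∧ C = 0 := by
  have hw1 : Differentiable ℝ w := hw.differentiable (by norm_num)
  have hw2 : Differentiable ℝ (deriv w) := hw.differentiable_deriv_two
  set g := fun x => deriv w x * (1 + w x ^ 2) ^ (-(5 / 4 : ℝ))
  set G := fun x => ∫ s in (0 : ℝ)..w x, (1 + s ^ 2) ^ (-(5 / 4 : ℝ))
  have hg (x : ℝ) : HasDerivAt g (C * (1 + w x ^ 2) ^ ((5 : ℝ) / 4)) x :=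
    hasDerivAt_mul_one_add_sq_rpow_of_ode (hw1 x).hasDerivAt (hw2 x).hasDerivAt (hode x)
  have hG (x : ℝ) : HasDerivAt G (g x) x :=
    ((hasDerivAt_integral_one_add_sq_rpow _ (w x)).comp x (hw1 x).hasDerivAt).congr_deriv
      (mul_comm _ _)
  have hGbdd (x : ℝ) : |G x| ≤ π / 2 :=
    abs_integral_one_add_sq_rpow_neg_le (by norm_num) (w x)
  have hg0 : ∀ x, g x = 0 := by
    rcases le_total 0 C with hC | hC
    · exact eq_zero_of_hasDerivAt_of_monotone_of_bddAbove hG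
        (monotone_of_hasDerivAt_nonneg hg fun x => by positivity)
        ⟨π / 2, by rintro _ ⟨x, rfl⟩; exact (abs_le.1 (hGbdd x)).2⟩
    · exact eq_zero_of_hasDerivAt_of_antitone_of_bddBelow hG
        (antitone_of_hasDerivAt_nonpos hg fun x =>
          mul_nonpos_of_nonpos_of_nonneg hC (by positivity))
        ⟨-(π / 2), by rintro _ ⟨x, rfl⟩; exact (abs_le.1 (hGbdd x)).1⟩
  have hC : C = 0 := by
    have h0 : HasDerivAt g 0 0 := by
      rw [show g = fun _ => 0 from funext hg0]; exact hasDerivAt_const _ _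
    exact (mul_eq_zero.1 ((hg 0).unique h0)).resolve_right (by positivity)
  have hw' (x : ℝ) : deriv w x = 0 := (mul_eq_zero.1 (hg0 x)).resolve_right (by positivity)
  exact ⟨⟨w 0, fun x => is_const_of_deriv_eq_zero hw1 hw' x 0⟩, hC⟩
end

section
/- Let w solve w''(1+w²) - (5/2)w(w')² = C(1+w²)^{7/2} with C > 0, w(0)=0, w'(0)=0, and suppose w(x) > 0 for some x > 0. Then the mean curvature H(x) = w'(x)/(1+w(x)²)^{3/2} satisfies H(x) = √(2C)/(1 + 1/w(x)²)^{1/4} for all x > 0 where w(x) > 0; in particular H(x) → √(2C) as w(x) → +∞. -/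
/-!
Multiplying the equation by `2 w' (1 + w²)^(-7/2)` makes it exact: the quantity
`(w')² (1 + w²)^(-5/2) - 2 C w` is constant, hence zero by the initial conditions. This first
integral gives `w ≥ 0`, so the equation forces `w'' > 0` and `w' > 0` for `x > 0`, and then
`H² = (w')² / (1 + w²)³ = 2 C w / (1 + w²)^(1/2)`, which is the claimed formula; its limit as
`w → ∞` is read off directly.
-/

open Set Filter Topology

noncomputable def firstIntegral (C : ℝ) (w : ℝ → ℝ) (x : ℝ) : ℝ :=
  deriv w x ^ 2 * (1 + w x ^ 2) ^ (-(5 : ℝ) / 2) - 2 * C * w x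

section FirstIntegral

variable {s : Set ℝ} {w : ℝ → ℝ} {C x : ℝ}

theorem hasDerivAt_firstIntegral
    (h₁ : HasDerivAt w (deriv w x) x) (h₂ : HasDerivAt (deriv w) (deriv (deriv w) x) x)
    (hode : deriv (deriv w) x * (1 + w x ^ 2) - 5 / 2 * w x * deriv w x ^ 2
      = C * (1 + w x ^ 2) ^ ((7 : ℝ) / 2)) :
    HasDerivAt (firstIntegral C w) 0 x := by
  have hA : 0 < 1 + w x ^ 2 := by positivity
  have hpow := ((h₁.pow 2).const_add 1).rpow_const (p := -(5 : ℝ) / 2) (.inl hA.ne')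
  refine (((h₂.pow 2).mul hpow).sub (h₁.const_mul (2 * C))).congr_deriv ?_
  have e₁ : (1 + w x ^ 2) ^ (-(5 : ℝ) / 2 - 1) * (1 + w x ^ 2) ^ ((7 : ℝ) / 2) = 1 := by
    rw [← Real.rpow_add hA]; norm_num
  have e₂ : (1 + w x ^ 2) ^ (-(5 : ℝ) / 2)
      = (1 + w x ^ 2) * (1 + w x ^ 2) ^ (-(5 : ℝ) / 2 - 1) := by
    rw [← Real.rpow_one_add' hA.le (by norm_num)]; norm_num
  simp only [Pi.pow_apply, Nat.cast_ofNat, Nat.add_one_sub_one, pow_one]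
  rw [e₂]
  linear_combination (2 * deriv w x * (1 + w x ^ 2) ^ (-(5 : ℝ) / 2 - 1)) * hode
    + 2 * C * deriv w x * e₁

theorem firstIntegral_eq (hs : IsOpen s) (hconv : Convex ℝ s) (hw : ContDiffOn ℝ 2 w s)
    (hode : ∀ x ∈ s, deriv (deriv w) x * (1 + w x ^ 2) - 5 / 2 * w x * deriv w x ^ 2
      = C * (1 + w x ^ 2) ^ ((7 : ℝ) / 2)) {y : ℝ} (hx : x ∈ s) (hy : y ∈ s) :
    firstIntegral C w x = firstIntegral C w y := by
  have hw' : ContDiffOn ℝ 1 (deriv w) s := hw.deriv_of_isOpen hs (by norm_num)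
  have hderiv : ∀ z ∈ s, HasDerivAt (firstIntegral C w) 0 z := fun z hz =>
    hasDerivAt_firstIntegral
      ((hw.differentiableOn (by norm_num)).differentiableAt (hs.mem_nhds hz)).hasDerivAt
      ((hw'.differentiableOn (by norm_num)).differentiableAt (hs.mem_nhds hz)).hasDerivAt
      (hode z hz)
  exact hs.is_const_of_deriv_eq_zero hconv.isPreconnected
    (fun z hz => (hderiv z hz).differentiableAt.differentiableWithinAt)
    (fun z hz => (hderiv z hz).deriv) hx hy

theorem sq_deriv_eq (hs : IsOpen s) (hconv : Convex ℝ s)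
    (hw : ContDiffOn ℝ 2 w s)
    (hode : ∀ x ∈ s, deriv (deriv w) x * (1 + w x ^ 2) - 5 / 2 * w x * deriv w x ^ 2
      = C * (1 + w x ^ 2) ^ ((7 : ℝ) / 2))
    (h0 : 0 ∈ s) (hw0 : w 0 = 0) (hw'0 : deriv w 0 = 0) (hx : x ∈ s) :
    deriv w x ^ 2 = 2 * C * w x * (1 + w x ^ 2) ^ ((5 : ℝ) / 2) := by
  have h := firstIntegral_eq hs hconv hw hode hx h0
  have hA : 0 < 1 + w x ^ 2 := by positivity
  have hcancel : (1 + w x ^ 2) ^ (-(5 : ℝ) / 2) * (1 + w x ^ 2) ^ ((5 : ℝ) / 2) = 1 := by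
    rw [← Real.rpow_add hA]; norm_num
  simp only [firstIntegral, hw0, hw'0] at h
  linear_combination (1 + w x ^ 2) ^ ((5 : ℝ) / 2) * h - deriv w x ^ 2 * hcancel

theorem nonneg_of_sq_deriv_eq (hC : 0 < C)
    (h : deriv w x ^ 2 = 2 * C * w x * (1 + w x ^ 2) ^ ((5 : ℝ) / 2)) : 0 ≤ w x := by
  have hA : 0 < (1 + w x ^ 2) ^ ((5 : ℝ) / 2) := by positivity
  nlinarith [sq_nonneg (deriv w x), mul_pos hC hA]

theorem deriv_deriv_pos (hC : 0 < C)
    (hode : deriv (deriv w) x * (1 + w x ^ 2) - 5 / 2 * w x * deriv w x ^ 2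
      = C * (1 + w x ^ 2) ^ ((7 : ℝ) / 2)) (hw : 0 ≤ w x) : 0 < deriv (deriv w) x := by
  have hA : 0 < (1 + w x ^ 2) ^ ((7 : ℝ) / 2) := by positivity
  have : 0 < deriv (deriv w) x * (1 + w x ^ 2) := by
    nlinarith [mul_nonneg hw (sq_nonneg (deriv w x))]
  exact pos_of_mul_pos_left this (by positivity)

end FirstIntegral

theorem div_rpow_three_halves_eq_of_sq_eq {a d C : ℝ} (ha : 0 < a) (hd : 0 < d) (hC : 0 ≤ C)
    (h : d ^ 2 = 2 * C * a * (1 + a ^ 2) ^ ((5 : ℝ) / 2)) :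
    d / (1 + a ^ 2) ^ ((3 : ℝ) / 2) = √(2 * C) / (1 + 1 / a ^ 2) ^ ((1 : ℝ) / 4) := by
  have hA : 0 < 1 + a ^ 2 := by positivity
  have h₃ : ((1 + a ^ 2) ^ ((3 : ℝ) / 2)) ^ 4 = (1 + a ^ 2) ^ 6 := by
    rw [← Real.rpow_natCast, ← Real.rpow_mul hA.le]; norm_num
  have h₅ : ((1 + a ^ 2) ^ ((5 : ℝ) / 2)) ^ 2 = (1 + a ^ 2) ^ 5 := by
    rw [← Real.rpow_natCast, ← Real.rpow_mul hA.le]; norm_num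
  have h₁ : ((1 + 1 / a ^ 2) ^ ((1 : ℝ) / 4)) ^ 4 = 1 + 1 / a ^ 2 := by
    rw [← Real.rpow_natCast, ← Real.rpow_mul (by positivity)]; norm_num
  refine (pow_left_inj₀ (by positivity) (by positivity) four_ne_zero).1 ?_
  rw [div_pow, div_pow, h₃, h₁, show d ^ 4 = (d ^ 2) ^ 2 by ring, h, mul_pow, h₅,
    show √(2 * C) ^ 4 = (√(2 * C) ^ 2) ^ 2 by ring, Real.sq_sqrt (by positivity)]
  field_simp
  ring

theorem tendsto_div_one_add_one_div_sq_rpow (Q : ℝ) :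
    Tendsto (fun a : ℝ => Q / (1 + 1 / a ^ 2) ^ ((1 : ℝ) / 4)) atTop (𝓝 Q) := by
  have h : Tendsto (fun a : ℝ => 1 + 1 / a ^ 2) atTop (𝓝 1) := by
    simpa [one_div] using
      tendsto_const_nhds.add (tendsto_pow_atTop (α := ℝ) two_ne_zero).inv_tendsto_atTop
  simpa [Pi.div_def] using tendsto_const_nhds.div (h.rpow_const (.inl one_ne_zero)) (by simp)

theorem stmt5_general (ρ : ℝ) (w H : ℝ → ℝ) (C : ℝ) (hC : 0 < C)
    (hw : ContDiffOn ℝ 2 w (Ioo (-ρ) ρ))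
    (hode : ∀ x ∈ Ioo (-ρ) ρ, deriv (deriv w) x * (1 + (w x) ^ 2)
      - (5 / 2) * w x * (deriv w x) ^ 2 = C * (1 + (w x) ^ 2) ^ ((7 : ℝ) / 2))
    (hw0 : w 0 = 0) (hw'0 : deriv w 0 = 0)
    (hH : ∀ x, H x = deriv w x / (1 + (w x) ^ 2) ^ ((3 : ℝ) / 2)) :
    (∀ x ∈ Ioo 0 ρ, 0 < w x →
        H x = Real.sqrt (2 * C) / (1 + 1 / (w x) ^ 2) ^ ((1 : ℝ) / 4))
    ∧ ∀ ε > 0, ∃ M : ℝ, ∀ x ∈ Ioo 0 ρ, M < w x →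
        |H x - Real.sqrt (2 * C)| < ε := by
  have hs : IsOpen (Ioo (-ρ) ρ) := isOpen_Ioo
  have hconv : Convex ℝ (Ioo (-ρ) ρ) := convex_Ioo _ _
  have hH_eq : ∀ x ∈ Ioo 0 ρ, 0 < w x →
      H x = Real.sqrt (2 * C) / (1 + 1 / (w x) ^ 2) ^ ((1 : ℝ) / 4) := by
    intro x ⟨hx0, hxρ⟩ hwx
    have h0 : (0 : ℝ) ∈ Ioo (-ρ) ρ := ⟨by linarith, by linarith⟩
    have hx : x ∈ Ioo (-ρ) ρ := ⟨by linarith, hxρ⟩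
    have hsq := fun y (hy : y ∈ Ioo (-ρ) ρ) => sq_deriv_eq hs hconv hw hode h0 hw0 hw'0 hy
    have hmono : StrictMonoOn (deriv w) (Ioo (-ρ) ρ) :=
      strictMonoOn_of_deriv_pos hconv (hw.continuousOn_deriv_of_isOpen hs (by norm_num))
        fun y hy => deriv_deriv_pos hC (hode y (interior_subset hy))
          (nonneg_of_sq_deriv_eq hC (hsq y (interior_subset hy)))
    have hw'x : 0 < deriv w x := hw'0 ▸ hmono h0 hx hx0
    rw [hH]
    exact div_rpow_three_halves_eq_of_sq_eq hwx hw'x hC.le (hsq x hx)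
  refine ⟨hH_eq, fun ε hε => ?_⟩
  obtain ⟨M, hM⟩ := eventually_atTop.1 <|
    ((tendsto_div_one_add_one_div_sq_rpow (Real.sqrt (2 * C))).eventually
      (Metric.ball_mem_nhds _ hε)).and (eventually_gt_atTop 0)
  refine ⟨M, fun x hx hMx => ?_⟩
  rw [hH_eq x hx (hM _ hMx.le).2, ← Real.dist_eq]
  exact (hM _ hMx.le).1

/-- Let `w : [0,ρ) → ℝ` solve `w''(1+w²) - (5/2)w(w')² = C(1+w²)^{7/2}` with
`C > 0`, `w(0)=0`, `w'(0)=0`, and suppose `w(x) > 0` for some `x > 0`. Then the mean curvature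
`H(x) = w'(x)/(1+w(x)²)^{3/2}` satisfies `H(x) = √(2C)/(1 + 1/w(x)²)^{1/4}` for all `x > 0`
with `w(x) > 0`; in particular `H(x) → √(2C)` as `w(x) → +∞`. -/
theorem stmt5 (ρ : ℝ) (hρ : 0 < ρ) (w H : ℝ → ℝ) (C : ℝ) (hC : 0 < C)
    (hw : ContDiffOn ℝ 2 w (Ioo (-ρ) ρ))
    (hode : ∀ x ∈ Ioo (-ρ) ρ, deriv (deriv w) x * (1 + (w x) ^ 2)
      - (5 / 2) * w x * (deriv w x) ^ 2 = C * (1 + (w x) ^ 2) ^ ((7 : ℝ) / 2))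
    (hw0 : w 0 = 0) (hw'0 : deriv w 0 = 0)
    (hpos : ∃ x ∈ Ioo 0 ρ, 0 < w x)
    (hH : ∀ x, H x = deriv w x / (1 + (w x) ^ 2) ^ ((3 : ℝ) / 2)) :
    (∀ x ∈ Ioo 0 ρ, 0 < w x →
        H x = Real.sqrt (2 * C) / (1 + 1 / (w x) ^ 2) ^ ((1 : ℝ) / 4))
    ∧ ∀ ε > 0, ∃ M : ℝ, ∀ x ∈ Ioo 0 ρ, M < w x →
        |H x - Real.sqrt (2 * C)| < ε :=
  stmt5_general ρ w H C hC hw hode hw0 hw'0 hH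
end

section
/- Let w solve w''(1+w²) - (5/2)w(w')² = C(1+w²)^{7/2} with C > 0, w(0)=0, w'(0)=0. Then along the graph, |∇_Σ H|²(x) = C²/(1+w(x)²), where |∇_Σ H|² = (1+w²)^{-1}((w''(1+w²) - 3(w')²w)/(1+w²)^{5/2})². In particular |∇_Σ H|² tends to 0 as w(x) → +∞. -/
/-!
Multiplying the equation by `2 w' (1 + w²)^(-7/2)` makes it exact:
`(w')² (1 + w²)^(-5/2) - 2 C w` is constant, hence zero by the initial conditions.
Substituting `(w')² = 2 C w (1 + w²)^(5/2)` into the numerator `w'' (1 + w²) - 3 (w')² w`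
collapses it to `C (1 + w²)^(5/2)`, so `|∇_Σ H|² = C² / (1 + w²)`.
-/

lemma hasDerivAt_one_add_sq_rpow {w : ℝ → ℝ} {w' x : ℝ} (p : ℝ) (hw : HasDerivAt w w' x) :
    HasDerivAt (fun y => (1 + w y ^ 2) ^ p)
      (2 * w x * w' * p * (1 + w x ^ 2) ^ (p - 1)) x := by
  have hsq : HasDerivAt (fun y => 1 + w y ^ 2) (2 * w x * w') x := by
    simpa using (hw.pow 2).const_add 1
  exact hsq.rpow_const (Or.inl (by positivity))

noncomputable def odeFirstIntegral (C : ℝ) (w v : ℝ → ℝ) (x : ℝ) : ℝ :=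
  v x ^ 2 * (1 + w x ^ 2) ^ (-(5 : ℝ) / 2) - 2 * C * w x

lemma hasDerivAt_odeFirstIntegral {w v : ℝ → ℝ} {a C x : ℝ}
    (hw : HasDerivAt w (v x) x) (hv : HasDerivAt v a x)
    (hode : a * (1 + w x ^ 2) - 5 / 2 * w x * v x ^ 2 = C * (1 + w x ^ 2) ^ ((7 : ℝ) / 2)) :
    HasDerivAt (odeFirstIntegral C w v) 0 x := by
  have hD := ((hv.pow 2).mul (hasDerivAt_one_add_sq_rpow (-(5 : ℝ) / 2) hw)).sub
    (hw.const_mul (2 * C))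
  refine hD.congr_deriv ?_
  have hu : 0 < 1 + w x ^ 2 := by positivity
  have hsplit : (1 + w x ^ 2) ^ (-(5 : ℝ) / 2)
      = (1 + w x ^ 2) ^ (-(5 : ℝ) / 2 - 1) * (1 + w x ^ 2) := by
    rw [← Real.rpow_add_one hu.ne']; norm_num
  have hinv : (1 + w x ^ 2) ^ (-(5 : ℝ) / 2 - 1) * (1 + w x ^ 2) ^ ((7 : ℝ) / 2) = 1 := by
    rw [← Real.rpow_add hu]; norm_num
  rw [hsplit, Pi.pow_apply]
  push_cast
  linear_combination 2 * v x * (1 + w x ^ 2) ^ (-(5 : ℝ) / 2 - 1) * hode + 2 * C * v x * hinv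

lemma sq_deriv_eq_of_ode {I : Set ℝ} {w : ℝ → ℝ} {C : ℝ}
    (hI : IsOpen I) (hI' : Convex ℝ I) (h0 : (0 : ℝ) ∈ I) (hw : ContDiffOn ℝ 2 w I)
    (hode : ∀ x ∈ I, deriv (deriv w) x * (1 + w x ^ 2) - 5 / 2 * w x * deriv w x ^ 2
      = C * (1 + w x ^ 2) ^ ((7 : ℝ) / 2))
    (hw0 : w 0 = 0) (hw'0 : deriv w 0 = 0) :
    ∀ x ∈ I, deriv w x ^ 2 = 2 * C * w x * (1 + w x ^ 2) ^ ((5 : ℝ) / 2) := by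
  have hdiff {f : ℝ → ℝ} (hf : ContDiffOn ℝ 1 f I) : ∀ x ∈ I, HasDerivAt f (deriv f x) x :=
    fun x hx => ((hf.differentiableOn one_ne_zero).differentiableAt (hI.mem_nhds hx)).hasDerivAt
  have hderiv : ∀ x ∈ I, HasDerivAt (odeFirstIntegral C w (deriv w)) 0 x :=
    fun x hx => hasDerivAt_odeFirstIntegral (hdiff (hw.of_le (by norm_num)) x hx)
      (hdiff (hw.deriv_of_isOpen hI (by norm_num)) x hx) (hode x hx)
  intro x hx
  have hconst := hI.is_const_of_deriv_eq_zero hI'.isPreconnected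
    (fun y hy => (hderiv y hy).differentiableAt.differentiableWithinAt)
    (fun y hy => (hderiv y hy).deriv) hx h0
  simp only [odeFirstIntegral, hw0, hw'0, neg_div,
    Real.rpow_neg (by positivity : (0 : ℝ) ≤ 1 + w x ^ 2)] at hconst
  field_simp at hconst
  linear_combination hconst

lemma ode_numerator_eq {w v a C : ℝ}
    (hode : a * (1 + w ^ 2) - 5 / 2 * w * v ^ 2 = C * (1 + w ^ 2) ^ ((7 : ℝ) / 2))
    (hfirst : v ^ 2 = 2 * C * w * (1 + w ^ 2) ^ ((5 : ℝ) / 2)) :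
    a * (1 + w ^ 2) - 3 * v ^ 2 * w = C * (1 + w ^ 2) ^ ((5 : ℝ) / 2) := by
  have hsplit : (1 + w ^ 2) ^ ((7 : ℝ) / 2) = (1 + w ^ 2) ^ ((5 : ℝ) / 2) * (1 + w ^ 2) := by
    rw [← Real.rpow_add_one (by positivity)]; norm_num
  linear_combination hode - w / 2 * hfirst + C * hsplit

lemma exists_abs_sq_div_one_add_sq_lt (C : ℝ) {ε : ℝ} (hε : 0 < ε) :
    ∃ M : ℝ, ∀ t, M < t → |C ^ 2 / (1 + t ^ 2)| < ε := by
  refine ⟨C ^ 2 / ε, fun t ht => ?_⟩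
  have ht' : C ^ 2 < ε * t := (div_lt_iff₀' hε).mp ht
  rw [abs_of_nonneg (by positivity), div_lt_iff₀ (by positivity)]
  nlinarith [sq_nonneg (t - 1), sq_nonneg C]

theorem stmt6_general (I : Set ℝ) (hI : IsOpen I) (hI' : Convex ℝ I) (h0 : (0 : ℝ) ∈ I)
    (w GradHsq : ℝ → ℝ) (C : ℝ) (hw : ContDiffOn ℝ 2 w I)
    (hode : ∀ x ∈ I, deriv (deriv w) x * (1 + (w x) ^ 2)
      - (5 / 2) * w x * (deriv w x) ^ 2 = C * (1 + (w x) ^ 2) ^ ((7 : ℝ) / 2))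
    (hw0 : w 0 = 0) (hw'0 : deriv w 0 = 0)
    (hGrad : ∀ x, GradHsq x = (1 + (w x) ^ 2)⁻¹ *
      ((deriv (deriv w) x * (1 + (w x) ^ 2) - 3 * (deriv w x) ^ 2 * w x)
        / (1 + (w x) ^ 2) ^ ((5 : ℝ) / 2)) ^ 2) :
    (∀ x ∈ I, GradHsq x = C ^ 2 / (1 + (w x) ^ 2))
    ∧ ∀ ε > 0, ∃ M : ℝ, ∀ x ∈ I, M < w x → |GradHsq x| < ε := by
  have hfirst := sq_deriv_eq_of_ode hI hI' h0 hw hode hw0 hw'0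
  have hGrad' : ∀ x ∈ I, GradHsq x = C ^ 2 / (1 + w x ^ 2) := by
    intro x hx
    have hpos : 0 < (1 + w x ^ 2) ^ ((5 : ℝ) / 2) := by positivity
    rw [hGrad, ode_numerator_eq (hode x hx) (hfirst x hx), mul_div_cancel_right₀ _ hpos.ne']
    ring
  refine ⟨hGrad', fun ε hε => ?_⟩
  obtain ⟨M, hM⟩ := exists_abs_sq_div_one_add_sq_lt C hε
  exact ⟨M, fun x hx hMx => hGrad' x hx ▸ hM (w x) hMx⟩

/-- Let `w` solve `w''(1+w²) - (5/2)w(w')² = C(1+w²)^{7/2}` with `C > 0`,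
`w(0)=0`, `w'(0)=0`. Then along the graph,
`|∇_Σ H|²(x) = (1+w²)⁻¹((w''(1+w²) - 3(w')²w)/(1+w²)^{5/2})² = C²/(1+w(x)²)`.
In particular `|∇_Σ H|²` tends to `0` as `w(x) → +∞`. -/
theorem stmt6 (I : Set ℝ) (hI : IsOpen I) (hI' : Convex ℝ I) (h0 : (0 : ℝ) ∈ I)
    (w GradHsq : ℝ → ℝ) (C : ℝ) (hC : 0 < C) (hw : ContDiffOn ℝ 2 w I)
    (hode : ∀ x ∈ I, deriv (deriv w) x * (1 + (w x) ^ 2)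
      - (5 / 2) * w x * (deriv w x) ^ 2 = C * (1 + (w x) ^ 2) ^ ((7 : ℝ) / 2))
    (hw0 : w 0 = 0) (hw'0 : deriv w 0 = 0)
    (hGrad : ∀ x, GradHsq x = (1 + (w x) ^ 2)⁻¹ *
      ((deriv (deriv w) x * (1 + (w x) ^ 2) - 3 * (deriv w x) ^ 2 * w x)
        / (1 + (w x) ^ 2) ^ ((5 : ℝ) / 2)) ^ 2) :
    (∀ x ∈ I, GradHsq x = C ^ 2 / (1 + (w x) ^ 2))
    ∧ ∀ ε > 0, ∃ M : ℝ, ∀ x ∈ I, M < w x → |GradHsq x| < ε :=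
  stmt6_general I hI hI' h0 w GradHsq C hw hode hw0 hw'0 hGrad
end

section
/- The cone over γ ⊂ S² is Willmore, i.e., H(r,s) = 𝓗(s)/r satisfies Δ_𝒞 H + (1/2)H³ − 2HK = 0 with K ≡ 0 (where Δ_𝒞 in the cone coordinates is (1/r)[∂_r(r∂_r ·) + ∂_s((1/r)∂_s ·)]), if and only if 𝓗 satisfies the ODE 𝓗''(s) = −𝓗(s)(1 + (1/2)𝓗(s)²). -/
open Set

/-!
Along the cone `H = 𝓗(s)/r` is homogeneous of degree `-1` in `r`, so both parts of the cone
Laplacian are multiples of `r⁻³`: the radial part contributes `𝓗/r³` and the angular part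
`𝓗''/r³`. Since `K ≡ 0`, the Willmore expression is `(𝓗'' + 𝓗 + 𝓗³/2)/r³`, which vanishes for
all `r > 0` exactly when the ODE holds.
-/

noncomputable def coneLaplacian (φ : ℝ → ℝ → ℝ) (r s : ℝ) : ℝ :=
  (1 / r) * (deriv (fun t => t * deriv (fun t' => φ t' s) t) r
    + deriv (fun σ => (1 / r) * deriv (fun σ' => φ r σ') σ) s)

lemma deriv_mul_deriv_const_div (c r : ℝ) :
    deriv (fun t => t * deriv (fun t' => c / t') t) r = c / r ^ 2 := by
  have hradial : (fun t => t * deriv (fun t' => c / t') t) = fun t => -c * t⁻¹ := by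
    funext t
    simp only [div_eq_mul_inv, deriv_const_mul_field', deriv_inv]
    rcases eq_or_ne t 0 with rfl | ht
    · simp
    · field_simp
  rw [hradial, deriv_const_mul_field, deriv_inv]
  ring

lemma deriv_const_mul_deriv_div_const (f : ℝ → ℝ) (r s : ℝ) :
    deriv (fun σ => (1 / r) * deriv (fun σ' => f σ' / r) σ) s = deriv (deriv f) s / r ^ 2 := by
  simp only [deriv_div_const, deriv_const_mul_field']
  ring

lemma coneLaplacian_div_radius (f : ℝ → ℝ) (r s : ℝ) :
    coneLaplacian (fun r s => f s / r) r s = (f s + deriv (deriv f) s) / r ^ 3 := by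
  rw [coneLaplacian, deriv_mul_deriv_const_div, deriv_const_mul_deriv_div_const]
  ring

theorem stmt9_general (𝓗 : ℝ → ℝ)
    (H K LapH : ℝ → ℝ → ℝ)
    (hH : ∀ r s, H r s = 𝓗 s / r)
    (hK : ∀ r s, K r s = 0)
    (hLap : ∀ r s, LapH r s = (1 / r) *
      (deriv (fun t => t * deriv (fun t' => H t' s) t) r
        + deriv (fun σ => (1 / r) * deriv (fun σ' => H r σ') σ) s)) :
    (∀ r ∈ Ioi (0 : ℝ), ∀ s : ℝ,
        LapH r s + (1 / 2) * (H r s) ^ 3 - 2 * H r s * K r s = 0)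
    ↔ (∀ s : ℝ, deriv (deriv 𝓗) s = -𝓗 s * (1 + (1 / 2) * (𝓗 s) ^ 2)) := by
  have hH' : H = fun r s => 𝓗 s / r := funext fun r => funext (hH r)
  have hWillmore : ∀ r s, LapH r s + (1 / 2) * (H r s) ^ 3 - 2 * H r s * K r s
      = (deriv (deriv 𝓗) s + 𝓗 s * (1 + (1 / 2) * (𝓗 s) ^ 2)) / r ^ 3 := by
    intro r s
    rw [hLap, ← coneLaplacian, hH', coneLaplacian_div_radius, hK]
    ring
  constructor
  · intro h s
    have h1 := h 1 (mem_Ioi.2 one_pos) s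
    rw [hWillmore, one_pow, div_one] at h1
    linarith
  · intro h r _ s
    rw [hWillmore, h s]
    ring

/-- The cone over `γ ⊂ S²` is Willmore, i.e. `H(r,s) = 𝓗(s)/r` satisfies
`Δ_𝒞 H + (1/2)H³ − 2HK = 0` with `K ≡ 0`, where in cone coordinates
`Δ_𝒞 φ = (1/r)[∂_r(r ∂_r φ) + ∂_s((1/r) ∂_s φ)]`, if and only if `𝓗` satisfies the ODE
`𝓗''(s) = −𝓗(s)(1 + (1/2)𝓗(s)²)`. -/
theorem stmt9 (𝓗 : ℝ → ℝ) (h𝓗 : ContDiff ℝ 2 𝓗)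
    (H K LapH : ℝ → ℝ → ℝ)
    (hH : ∀ r s, H r s = 𝓗 s / r)
    (hK : ∀ r s, K r s = 0)
    (hLap : ∀ r s, LapH r s = (1 / r) *
      (deriv (fun t => t * deriv (fun t' => H t' s) t) r
        + deriv (fun σ => (1 / r) * deriv (fun σ' => H r σ') σ) s)) :
    (∀ r ∈ Ioi (0 : ℝ), ∀ s : ℝ,
        LapH r s + (1 / 2) * (H r s) ^ 3 - 2 * H r s * K r s = 0)
    ↔ (∀ s : ℝ, deriv (deriv 𝓗) s = -𝓗 s * (1 + (1 / 2) * (𝓗 s) ^ 2)) :=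
  stmt9_general 𝓗 H K LapH hH hK hLap
end

section
/- Let 𝓗_a solve 𝓗'' = −𝓗(1 + (1/2)𝓗²) with 𝓗_a(0) = a > 0, 𝓗_a'(0) = 0, and let c_a = inf{s > 0 : 𝓗_a(s) = 0}. Then 0 < c_a ≤ π/2. -/
/-!
Sturm comparison with `cos`. For `W = 𝓗' cos + 𝓗 sin` one has `W' = (𝓗'' + 𝓗) cos = -𝓗³ cos / 2`,
so `W` decreases on `[0, π/2]` as long as `𝓗 > 0` there. Since `W 0 = 𝓗' 0 = 0` and
`W (π/2) = 𝓗 (π/2)`, the solution cannot stay positive on all of `[0, π/2]`. The zeros are also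
bounded away from `0` by continuity, since `𝓗 0 = a > 0`.
-/

open Set Real

section SturmComparison

variable {f f' f'' : ℝ → ℝ}

theorem apply_pi_div_two_le_deriv_zero (hf : ∀ x, HasDerivAt f (f' x) x)
    (hf' : ∀ x, HasDerivAt f' (f'' x) x) (hcomp : ∀ x ∈ Ioo 0 (π / 2), f'' x + f x ≤ 0) :
    f (π / 2) ≤ f' 0 := by
  set W : ℝ → ℝ := fun x ↦ f' x * cos x + f x * sin x
  have hW : ∀ x, HasDerivAt W ((f'' x + f x) * cos x) x := fun x ↦ by
    refine (((hf' x).mul (hasDerivAt_cos x)).add ((hf x).mul (hasDerivAt_sin x))).congr_deriv ?_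
    ring
  have hanti : AntitoneOn W (Icc 0 (π / 2)) := by
    refine antitoneOn_of_hasDerivWithinAt_nonpos (convex_Icc _ _)
      (fun x _ ↦ (hW x).continuousAt.continuousWithinAt) (fun x _ ↦ (hW x).hasDerivWithinAt) ?_
    rw [interior_Icc]
    intro x hx
    have hcos : 0 < cos x := cos_pos_of_mem_Ioo ⟨by linarith [hx.1, pi_pos], hx.2⟩
    exact mul_nonpos_of_nonpos_of_nonneg (hcomp x hx) hcos.le
  have hpi : (0 : ℝ) ≤ π / 2 := by positivity
  simpa [W] using hanti (left_mem_Icc.2 hpi) (right_mem_Icc.2 hpi) hpi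

theorem pos_on_Icc_of_forall_ne_zero {b : ℝ} (hf : ContinuousOn f (Icc 0 b)) (h0 : 0 < f 0)
    (hne : ∀ t ∈ Ioc 0 b, f t ≠ 0) : ∀ t ∈ Icc 0 b, 0 < f t := by
  rintro t ⟨ht0, htb⟩
  by_contra! hft
  obtain ⟨c, hc, hfc⟩ := intermediate_value_Icc' ht0 (hf.mono (Icc_subset_Icc_right htb))
    ⟨hft, h0.le⟩
  have hc0 : c ≠ 0 := by rintro rfl; exact h0.ne' hfc
  exact hne c ⟨lt_of_le_of_ne hc.1 (Ne.symm hc0), hc.2.trans htb⟩ hfc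

theorem exists_zero_mem_Ioc_pi_div_two (hf : ∀ x, HasDerivAt f (f' x) x)
    (hf' : ∀ x, HasDerivAt f' (f'' x) x) (hcomp : ∀ x, 0 < f x → f'' x + f x ≤ 0)
    (h0 : 0 < f 0) (h'0 : f' 0 ≤ 0) : ∃ t ∈ Ioc 0 (π / 2), f t = 0 := by
  by_contra! hne
  have hpos := pos_on_Icc_of_forall_ne_zero (fun x _ ↦ (hf x).continuousAt.continuousWithinAt)
    h0 hne
  have hle := apply_pi_div_two_le_deriv_zero hf hf'
    fun x hx ↦ hcomp x (hpos x (Ioo_subset_Icc_self hx))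
  linarith [hpos (π / 2) (right_mem_Icc.2 (by positivity))]

end SturmComparison

theorem sInf_pos_zeros_mem_Ioc {f : ℝ → ℝ} {t : ℝ} (hf : ContinuousAt f 0) (h0 : f 0 ≠ 0)
    (ht : 0 < t) (hft : f t = 0) :
    sInf {s : ℝ | 0 < s ∧ f s = 0} ∈ Ioc 0 t := by
  obtain ⟨δ, hδ, hball⟩ := Metric.eventually_nhds_iff.1 (hf.eventually_ne h0)
  have hδle : ∀ s ∈ {s : ℝ | 0 < s ∧ f s = 0}, δ ≤ s := by
    rintro s ⟨hs, hfs⟩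
    by_contra! hsδ
    exact hball (by rwa [dist_0_eq_abs, abs_of_pos hs]) hfs
  exact ⟨hδ.trans_le (le_csInf ⟨t, ht, hft⟩ hδle), csInf_le ⟨δ, hδle⟩ ⟨ht, hft⟩⟩

/-- Let `𝓗_a` solve `𝓗'' = −𝓗(1 + (1/2)𝓗²)` with `𝓗_a(0) = a > 0`,
`𝓗_a'(0) = 0`, and let `c_a = inf{s > 0 : 𝓗_a(s) = 0}`. Then `0 < c_a ≤ π/2`. -/
theorem stmt11 (a : ℝ) (ha : 0 < a) (𝓗 : ℝ → ℝ) (h𝓗 : ContDiff ℝ 2 𝓗)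
    (hode : ∀ s : ℝ, deriv (deriv 𝓗) s = -𝓗 s * (1 + (1 / 2) * (𝓗 s) ^ 2))
    (h0 : 𝓗 0 = a) (h'0 : deriv 𝓗 0 = 0) :
    0 < sInf {s : ℝ | 0 < s ∧ 𝓗 s = 0}
    ∧ sInf {s : ℝ | 0 < s ∧ 𝓗 s = 0} ≤ Real.pi / 2 := by
  have hd : ∀ x, HasDerivAt 𝓗 (deriv 𝓗 x) x :=
    fun x ↦ ((h𝓗.differentiable (by norm_num)) x).hasDerivAt
  have hd' : ∀ x, HasDerivAt (deriv 𝓗) (deriv (deriv 𝓗) x) x :=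
    fun x ↦ (h𝓗.differentiable_deriv_two x).hasDerivAt
  have hcomp : ∀ x, 0 < 𝓗 x → deriv (deriv 𝓗) x + 𝓗 x ≤ 0 := fun x hx ↦ by
    rw [hode x]
    nlinarith [pow_pos hx 3]
  obtain ⟨t, ⟨ht0, htpi⟩, htz⟩ :=
    exists_zero_mem_Ioc_pi_div_two hd hd' hcomp (h0 ▸ ha) h'0.le
  obtain ⟨hpos, hle⟩ := sInf_pos_zeros_mem_Ioc (hd 0).continuousAt (h0 ▸ ha.ne') ht0 htz
  exact ⟨hpos, hle.trans htpi⟩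
end

section
/- Let 𝓗_a solve 𝓗'' = −𝓗(1 + (1/2)𝓗²) with 𝓗_a(0) = a > 0, 𝓗_a'(0) = 0, and c_a its first positive zero. Then c_a → 0 as a → +∞. -/
/-!
While `𝓗 > 0` the equation gives `𝓗'' ≤ -𝓗³/2 < 0`, so `𝓗` is concave, and the time scale of
`𝓗'' = -𝓗³/2` started at height `a` is `1/a`. With `t = 5/a`: if `𝓗 t ≥ a/2`, concavity keeps
`𝓗 ≥ a/2` on `[0, t]`, hence `𝓗'' ≤ -a³/16` there and `𝓗 t ≤ a - a³t²/32 < a/2`, absurd; if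
`𝓗 t < a/2`, concavity at the midpoint gives `𝓗 (2t) ≤ 2 𝓗 t - a < 0`. Either way `𝓗` vanishes
in `(0, 10/a]`.
-/

open Set

lemma concaveOn_Icc_of_hasDerivAt2_nonpos {f f' f'' : ℝ → ℝ} {x y : ℝ}
    (hf : ∀ s, HasDerivAt f (f' s) s) (hf' : ∀ s, HasDerivAt f' (f'' s) s)
    (hf'' : ∀ s ∈ Ioo x y, f'' s ≤ 0) : ConcaveOn ℝ (Icc x y) f := by
  refine concaveOn_of_hasDerivWithinAt2_nonpos (convex_Icc x y)
    (HasDerivAt.continuousOn fun s _ ↦ hf s) (fun s _ ↦ (hf s).hasDerivWithinAt)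
    (fun s _ ↦ (hf' s).hasDerivWithinAt) ?_
  simpa only [interior_Icc] using hf''

lemma ConcaveOn.le_add_mul_sub_of_hasDerivAt {S : Set ℝ} {f : ℝ → ℝ} {f' x y : ℝ}
    (hfc : ConcaveOn ℝ S f) (hx : x ∈ S) (hy : y ∈ S) (hxy : x ≤ y) (hf' : HasDerivAt f f' x) :
    f y ≤ f x + f' * (y - x) := by
  rcases hxy.eq_or_lt with rfl | hlt
  · simp
  have hslope := hfc.slope_le_of_hasDerivAt hx hy hlt hf'
  rw [slope_def_field, div_le_iff₀ (sub_pos.2 hlt)] at hslope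
  linarith

lemma pos_on_Icc_of_forall_Ioc_ne_zero {f : ℝ → ℝ} {x y : ℝ} (hf : ContinuousOn f (Icc x y))
    (hx : 0 < f x) (hne : ∀ s ∈ Ioc x y, f s ≠ 0) : ∀ s ∈ Icc x y, 0 < f s := by
  intro s hs
  by_contra! hle
  obtain ⟨z, hz, hfz⟩ := intermediate_value_Icc' hs.1 (hf.mono (Icc_subset_Icc_right hs.2))
    ⟨hle, hx.le⟩
  rcases hz.1.eq_or_lt with rfl | hxz
  · exact hx.ne' hfz
  · exact hne z ⟨hxz, hz.2.trans hs.2⟩ hfz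

lemma ConcaveOn.add_le_two_mul_midpoint {f : ℝ → ℝ} {x y : ℝ} (hfc : ConcaveOn ℝ (Icc x y) f)
    (hxy : x ≤ y) : f x + f y ≤ 2 * f ((x + y) / 2) := by
  have hmid := hfc.2 (left_mem_Icc.2 hxy) (right_mem_Icc.2 hxy) (by norm_num : (0 : ℝ) ≤ 1 / 2)
    (by norm_num : (0 : ℝ) ≤ 1 / 2) (by norm_num)
  simp only [smul_eq_mul] at hmid
  rw [show 1 / 2 * x + 1 / 2 * y = (x + y) / 2 by ring] at hmid
  linarith

lemma le_sub_of_hasDerivAt2_le_neg {f f' f'' : ℝ → ℝ} {c x y : ℝ}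
    (hf : ∀ s, HasDerivAt f (f' s) s) (hf' : ∀ s, HasDerivAt f' (f'' s) s) (hx : f' x = 0)
    (hf'' : ∀ s ∈ Ioo x y, f'' s ≤ -c) (hxy : x ≤ y) :
    f y ≤ f x - c / 2 * (y - x) ^ 2 := by
  have hq : ConcaveOn ℝ (Icc x y) (fun u ↦ f u + c / 2 * (u - x) ^ 2) :=
    concaveOn_Icc_of_hasDerivAt2_nonpos (f' := fun u ↦ f' u + c * (u - x))
      (f'' := fun u ↦ f'' u + c)
      (fun s ↦ ((hf s).add (((hasDerivAt_id s).sub_const x).pow 2 |>.const_mul (c / 2))).congr_deriv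
        (by
          simp only [Nat.cast_ofNat, id_eq, Nat.add_one_sub_one, pow_one, mul_one, add_right_inj]
          ring))
      (fun s ↦ ((hf' s).add (((hasDerivAt_id s).sub_const x).const_mul c)).congr_deriv (by simp))
      fun s hs ↦ by linarith [hf'' s hs]
  have := hq.le_add_mul_sub_of_hasDerivAt (left_mem_Icc.2 hxy) (right_mem_Icc.2 hxy) hxy
    ((hf x).add (((hasDerivAt_id x).sub_const x).pow 2 |>.const_mul (c / 2)))
  norm_num [hx] at this
  linarith

theorem exists_zero_Ioc_of_hasDerivAt2_le_neg_cube {g g' g'' : ℝ → ℝ} {a : ℝ} (ha : 0 < a)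
    (hg : ∀ s, HasDerivAt g (g' s) s) (hg' : ∀ s, HasDerivAt g' (g'' s) s)
    (hg'' : ∀ s, 0 < g s → g'' s ≤ -g s ^ 3 / 2) (h0 : g 0 = a) (h0' : g' 0 = 0) :
    ∃ s ∈ Ioc 0 (10 / a), g s = 0 := by
  by_contra! hne
  set t := 5 / a with ht
  have ht0 : 0 < t := by positivity
  rw [show 10 / a = 2 * t by rw [ht]; ring] at hne
  have hpos := pos_on_Icc_of_forall_Ioc_ne_zero (HasDerivAt.continuousOn fun s _ ↦ hg s)
    (h0 ▸ ha) hne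
  have hconc : ConcaveOn ℝ (Icc 0 (2 * t)) g :=
    concaveOn_Icc_of_hasDerivAt2_nonpos hg hg' fun s hs ↦ by
      have hgs := hpos s (Ioo_subset_Icc_self hs)
      linarith [hg'' s hgs, pow_pos hgs 3]
  rcases lt_or_ge (g t) (a / 2) with hlow | hhigh
  · have hmid := hconc.add_le_two_mul_midpoint (by linarith)
    rw [show (0 + 2 * t) / 2 = t by ring, h0] at hmid
    linarith [hpos (2 * t) ⟨by linarith, le_rfl⟩]
  · have hge : ∀ u ∈ Icc 0 t, a / 2 ≤ g u := fun u hu ↦ by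
      have := (hconc.subset (Icc_subset_Icc_right (by linarith)) (convex_Icc 0 t)).ge_on_segment
        (left_mem_Icc.2 ht0.le) (right_mem_Icc.2 ht0.le) (by rwa [segment_eq_Icc ht0.le])
      rw [h0] at this
      exact le_trans (le_min (by linarith) hhigh) this
    have hdrop := le_sub_of_hasDerivAt2_le_neg (c := a ^ 3 / 16) hg hg' h0' (fun s hs ↦ by
      have hgs := hge s (Ioo_subset_Icc_self hs)
      have := hg'' s (by linarith)
      nlinarith [pow_le_pow_left₀ (by positivity) hgs 3]) ht0.le
    have hat : a ^ 3 * t ^ 2 = 25 * a := by rw [ht]; field_simp; ring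
    rw [h0, sub_zero] at hdrop
    linarith [hge t (right_mem_Icc.2 ht0.le)]

/-- Let `𝓗_a` solve `𝓗'' = −𝓗(1 + (1/2)𝓗²)` with `𝓗_a(0) = a > 0`,
`𝓗_a'(0) = 0`, and `c_a` its first positive zero. Then `c_a → 0` as `a → +∞`. -/
theorem stmt13 :
    ∀ ε > (0 : ℝ), ∃ A : ℝ, ∀ a > A, ∀ 𝓗 : ℝ → ℝ, ContDiff ℝ 2 𝓗 →
      (∀ s : ℝ, deriv (deriv 𝓗) s = -𝓗 s * (1 + (1 / 2) * (𝓗 s) ^ 2)) →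
      𝓗 0 = a → deriv 𝓗 0 = 0 →
      sInf {s : ℝ | 0 < s ∧ 𝓗 s = 0} < ε := by
  intro ε hε
  refine ⟨10 / ε, fun a ha g hg hode h0 h0' ↦ ?_⟩
  have ha0 : 0 < a := (div_pos (by norm_num) hε).trans ha
  have hg' : ∀ s, HasDerivAt (deriv g) (-g s * (1 + 1 / 2 * g s ^ 2)) s := fun s ↦
    hode s ▸ (hg.differentiable_deriv_two s).hasDerivAt
  obtain ⟨s, ⟨hs0, hsa⟩, hgs⟩ := exists_zero_Ioc_of_hasDerivAt2_le_neg_cube ha0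
    (fun s ↦ (hg.differentiable two_ne_zero s).hasDerivAt) hg'
    (fun s hs ↦ by nlinarith [pow_pos hs 3]) h0 h0'
  calc sInf {s : ℝ | 0 < s ∧ g s = 0} ≤ s := csInf_le ⟨0, fun _ hx ↦ hx.1.le⟩ ⟨hs0, hgs⟩
    _ ≤ 10 / a := hsa
    _ < ε := (div_lt_comm₀ ha0 hε).2 ha
end

section
/- Every solution 𝓗 of 𝓗'' = −𝓗(1 + (1/2)𝓗²) is bounded, defined on all of ℝ, and if nonconstant it is periodic. -/
/-!
The energy `x² + x⁴/4 + y²` is conserved along solutions of `x' = y, y' = -x(1 + x²/2)` and has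
bounded sublevel sets. Cutting the vector field off outside such a sublevel set gives a globally
Lipschitz field, whose solutions are global, keep their energy, and therefore solve the original
system; a solution on `I` is the restriction of one of them by uniqueness. The velocity cannot keep
a sign on a half-line, since the restoring force would eventually reverse it, so it vanishes at two
times `a < b`. The equation is reversible, so the position is symmetric about each of them and
hence `2 (b - a)`-periodic.
-/

open Set Metric

section ODE

variable {E : Type*} [NormedAddCommGroup E] [NormedSpace ℝ E]

theorem eqOn_of_hasDerivAt_of_lipschitzOnWith {v : E → E} {S : Set E} {K : NNReal}
    (hv : LipschitzOnWith K v S) {I : Set ℝ} (hI : I.OrdConnected) {f g : ℝ → E}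
    (hf : ∀ t ∈ I, HasDerivAt f (v (f t)) t ∧ f t ∈ S)
    (hg : ∀ t ∈ I, HasDerivAt g (v (g t)) t ∧ g t ∈ S)
    {t₀ : ℝ} (ht₀ : t₀ ∈ I) (heq : f t₀ = g t₀) : EqOn f g I := by
  intro t ht
  rcases le_total t₀ t with hle | hle
  · have hsub : Icc t₀ t ⊆ I := hI.out ht₀ ht
    refine ODE_solution_unique_of_mem_Icc_right (v := fun _ => v) (s := fun _ => S)
      (fun _ _ => hv) ?_ (fun s hs => (hf s (hsub (Ico_subset_Icc_self hs))).1.hasDerivWithinAt)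
      (fun s hs => (hf s (hsub (Ico_subset_Icc_self hs))).2) ?_
      (fun s hs => (hg s (hsub (Ico_subset_Icc_self hs))).1.hasDerivWithinAt)
      (fun s hs => (hg s (hsub (Ico_subset_Icc_self hs))).2) heq (right_mem_Icc.2 hle)
    · exact HasDerivAt.continuousOn fun s hs => (hf s (hsub hs)).1
    · exact HasDerivAt.continuousOn fun s hs => (hg s (hsub hs)).1
  · have hsub : Icc t t₀ ⊆ I := hI.out ht ht₀
    refine ODE_solution_unique_of_mem_Icc_left (v := fun _ => v) (s := fun _ => S)
      (fun _ _ => hv) ?_ (fun s hs => (hf s (hsub (Ioc_subset_Icc_self hs))).1.hasDerivWithinAt)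
      (fun s hs => (hf s (hsub (Ioc_subset_Icc_self hs))).2) ?_
      (fun s hs => (hg s (hsub (Ioc_subset_Icc_self hs))).1.hasDerivWithinAt)
      (fun s hs => (hg s (hsub (Ioc_subset_Icc_self hs))).2) heq (left_mem_Icc.2 hle)
    · exact HasDerivAt.continuousOn fun s hs => (hf s (hsub hs)).1
    · exact HasDerivAt.continuousOn fun s hs => (hg s (hsub hs)).1

theorem ContDiff.eqOn_of_hasDerivAt {v : E → E} (hv : ContDiff ℝ 1 v) {I : Set ℝ}
    (hI : I.OrdConnected) {f g : ℝ → E} (hf : ∀ t ∈ I, HasDerivAt f (v (f t)) t)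
    (hg : ∀ t ∈ I, HasDerivAt g (v (g t)) t) {t₀ : ℝ} (ht₀ : t₀ ∈ I) (heq : f t₀ = g t₀) :
    EqOn f g I := by
  intro t ht
  let J := uIcc t₀ t
  have hJ : J ⊆ I := hI.uIcc_subset ht₀ ht
  have hcompact : IsCompact (f '' J ∪ g '' J) :=
    (isCompact_uIcc.image_of_continuousOn (HasDerivAt.continuousOn fun s hs => hf s (hJ hs))).union
      (isCompact_uIcc.image_of_continuousOn (HasDerivAt.continuousOn fun s hs => hg s (hJ hs)))
  obtain ⟨K, hK⟩ :=
    hv.locallyLipschitz.locallyLipschitzOn.exists_lipschitzOnWith_of_compact hcompact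
  exact eqOn_of_hasDerivAt_of_lipschitzOnWith hK ordConnected_uIcc
    (fun s hs => ⟨hf s (hJ hs), .inl ⟨s, hs, rfl⟩⟩) (fun s hs => ⟨hg s (hJ hs), .inr ⟨s, hs, rfl⟩⟩)
    left_mem_uIcc heq right_mem_uIcc

theorem exists_hasDerivAt_Ioo_of_lipschitzWith [CompleteSpace E] {w : E → E} {K : NNReal}
    (hw : LipschitzWith K w) {C : ℝ} (hC : ∀ x, ‖w x‖ ≤ C) (t₀ : ℝ) (x₀ : E) {r : ℝ}
    (hr : 0 < r) :
    ∃ α : ℝ → E, α t₀ = x₀ ∧ ∀ t ∈ Ioo (t₀ - r) (t₀ + r), HasDerivAt α (w (α t)) t := by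
  have hpl : IsPicardLindelof (fun _ => w) (⟨t₀, by constructor <;> linarith⟩ :
      Icc (t₀ - r) (t₀ + r)) x₀ ⟨C.toNNReal * r, by positivity⟩ 0 C.toNNReal K :=
    IsPicardLindelof.of_time_independent (fun x _ => (hC x).trans C.le_coe_toNNReal)
      hw.lipschitzOnWith (by
        simp only [Real.coe_toNNReal', add_sub_cancel_left, sub_sub_cancel, max_self,
          NNReal.coe_zero, sub_zero]
        exact le_rfl)
  obtain ⟨α, hα₀, hα⟩ := hpl.exists_eq_forall_mem_Icc_hasDerivWithinAt₀
  exact ⟨α, hα₀, fun t ht => (hα t (Ioo_subset_Icc_self ht)).hasDerivAt (Icc_mem_nhds ht.1 ht.2)⟩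

theorem exists_hasDerivAt_of_lipschitzWith [CompleteSpace E] {w : E → E} {K : NNReal}
    (hw : LipschitzWith K w) {C : ℝ} (hC : ∀ x, ‖w x‖ ≤ C) (t₀ : ℝ) (x₀ : E) :
    ∃ γ : ℝ → E, γ t₀ = x₀ ∧ ∀ t, HasDerivAt γ (w (γ t)) t := by
  let J : ℕ → Set ℝ := fun n => Ioo (t₀ - (n + 1)) (t₀ + (n + 1))
  have hJ₀ (n : ℕ) : t₀ ∈ J n := by
    constructor <;> linarith [n.cast_nonneg (α := ℝ)]
  have hJ_mono : Monotone J := fun m n hmn => Ioo_subset_Ioo (by gcongr) (by gcongr)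
  choose α hα₀ hα using fun n : ℕ => exists_hasDerivAt_Ioo_of_lipschitzWith hw hC t₀ x₀
    (r := n + 1) (by positivity)
  have hα_eq {m n : ℕ} (hmn : m ≤ n) : EqOn (α m) (α n) (J m) :=
    eqOn_of_hasDerivAt_of_lipschitzOnWith (S := univ) hw.lipschitzOnWith ordConnected_Ioo
      (fun t ht => ⟨hα m t ht, trivial⟩) (fun t ht => ⟨hα n t (hJ_mono hmn ht), trivial⟩)
      (hJ₀ m) ((hα₀ m).trans (hα₀ n).symm)
  let N : ℝ → ℕ := fun t => ⌊|t - t₀|⌋₊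
  have hN (t : ℝ) : t ∈ J (N t) := by
    have := abs_lt.mp (Nat.lt_floor_add_one |t - t₀|)
    constructor <;> linarith
  have hglue (m n : ℕ) : EqOn (α m) (α n) (J m ∩ J n) := fun s hs => by
    rcases le_total m n with hmn | hnm
    · exact hα_eq hmn hs.1
    · exact (hα_eq hnm hs.2).symm
  refine ⟨fun t => α (N t) t, hα₀ _, fun t => ?_⟩
  have hloc : (fun s => α (N s) s) =ᶠ[nhds t] α (N t) :=
    Filter.eventually_of_mem (isOpen_Ioo.mem_nhds (hN t)) fun s hs => hglue _ _ ⟨hN s, hs⟩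
  exact (hα _ t (hN t)).congr_of_eventuallyEq hloc

theorem apply_eq_apply_of_fderiv_apply_eq_zero {V : E → ℝ} (hV : Differentiable ℝ V) {w : E → E}
    (hVw : ∀ x, fderiv ℝ V x (w x) = 0) {γ : ℝ → E} (hγ : ∀ t, HasDerivAt γ (w (γ t)) t)
    (s t : ℝ) : V (γ s) = V (γ t) := by
  have hVγ (t : ℝ) : HasDerivAt (V ∘ γ) 0 t := by
    simpa [hVw] using (hV (γ t)).hasFDerivAt.comp_hasDerivAt t (hγ t)
  exact is_const_of_deriv_eq_zero (fun t => (hVγ t).differentiableAt) (fun t => (hVγ t).deriv) s t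

theorem exists_hasDerivAt_of_fderiv_apply_eq_zero [FiniteDimensional ℝ E] {v : E → E}
    (hv : ContDiff ℝ 1 v) {V : E → ℝ} (hV : Differentiable ℝ V)
    (hVv : ∀ x, fderiv ℝ V x (v x) = 0) (hbdd : ∀ c, Bornology.IsBounded {x | V x ≤ c})
    (t₀ : ℝ) (x₀ : E) : ∃ γ : ℝ → E, γ t₀ = x₀ ∧ ∀ t, HasDerivAt γ (v (γ t)) t := by
  obtain ⟨R, hR⟩ := (isBounded_iff_subset_closedBall 0).1 (hbdd (V x₀))
  let φ : ContDiffBump (0 : E) := ⟨max R 1, max R 1 + 1, by positivity, by linarith⟩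
  let w : E → E := fun x => φ x • v x
  have hw : ContDiff ℝ 1 w := φ.contDiff.smul hv
  have hw_supp : HasCompactSupport w := φ.hasCompactSupport.smul_right
  obtain ⟨K, hK⟩ := hw.lipschitzWith_of_hasCompactSupport hw_supp one_ne_zero
  obtain ⟨C, hC⟩ := hw_supp.exists_bound_of_continuous hw.continuous
  obtain ⟨γ, hγ₀, hγ⟩ := exists_hasDerivAt_of_lipschitzWith hK hC t₀ x₀
  -- The cutoff only rescales `v`, so `V` is still conserved and `γ` stays where `φ = 1`.
  have hVγ (t : ℝ) : V (γ t) = V x₀ := hγ₀ ▸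
    apply_eq_apply_of_fderiv_apply_eq_zero hV (fun x => by simp [w, hVv]) hγ t t₀
  have hφγ (t : ℝ) : φ (γ t) = 1 :=
    φ.one_of_mem_closedBall (closedBall_subset_closedBall (le_max_left R 1) (hR (hVγ t).le))
  exact ⟨γ, hγ₀, fun t => by simpa [w, hφγ] using hγ t⟩

theorem contDiff_of_hasDerivAt {v : E → E} {n : ℕ} (hv : ContDiff ℝ n v) {γ : ℝ → E}
    (hγ : ∀ t, HasDerivAt γ (v (γ t)) t) : ContDiff ℝ (n + 1) γ := by
  have hdiff : Differentiable ℝ γ := fun t => (hγ t).differentiableAt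
  have hderiv : deriv γ = v ∘ γ := funext fun t => (hγ t).deriv
  induction n with
  | zero =>
    refine contDiff_succ_iff_deriv.2 ⟨hdiff, by simp, ?_⟩
    rw [hderiv, Nat.cast_zero, contDiff_zero]
    exact hv.continuous.comp hdiff.continuous
  | succ n ih =>
    refine contDiff_succ_iff_deriv.2 ⟨hdiff, by simp, ?_⟩
    rw [hderiv]
    exact hv.comp (ih (hv.of_le (by norm_cast; omega)))

end ODE

theorem exists_lt_zero_of_hasDerivAt_le_neg {f f' : ℝ → ℝ} {a m : ℝ}
    (hf : ∀ t, a ≤ t → HasDerivAt f (f' t) t) (hm : 0 < m) (hf' : ∀ t, a ≤ t → f' t ≤ -m) :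
    ∃ t, a ≤ t ∧ f t < 0 := by
  have hanti : AntitoneOn (fun t => f t + m * t) (Ici a) := by
    refine antitoneOn_of_hasDerivWithinAt_nonpos (convex_Ici a) ?_
      (fun t ht =>
        ((hf t (interior_subset ht)).add ((hasDerivAt_id t).const_mul m)).hasDerivWithinAt)
      (fun t ht => ?_)
    · exact HasDerivAt.continuousOn fun t ht => (hf t ht).add ((hasDerivAt_id t).const_mul m)
    · linarith [hf' t (interior_subset ht)]
  set t := a + (|f a| + 1) / m
  have hat : a ≤ t := le_add_of_nonneg_right (by positivity)
  have hmt : m * t = m * a + (|f a| + 1) := by simp only [t]; field_simp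
  refine ⟨t, hat, ?_⟩
  have := hanti self_mem_Ici hat hat
  linarith [le_abs_self (f a)]

namespace Duffing

noncomputable def vectorField (p : ℝ × ℝ) : ℝ × ℝ := (p.2, -p.1 * (1 + 1 / 2 * p.1 ^ 2))

noncomputable def energy (p : ℝ × ℝ) : ℝ := p.1 ^ 2 + p.1 ^ 4 / 4 + p.2 ^ 2

theorem contDiff_vectorField {n : WithTop ℕ∞} : ContDiff ℝ n vectorField := by
  unfold vectorField; fun_prop

theorem vectorField_neg (p : ℝ × ℝ) : vectorField (-p) = -vectorField p := by
  simp only [vectorField, Prod.fst_neg, Prod.snd_neg, Prod.neg_mk]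
  congr 1
  ring

theorem differentiable_energy : Differentiable ℝ energy := by
  unfold energy; fun_prop

theorem fderiv_energy_apply_vectorField (p : ℝ × ℝ) :
    fderiv ℝ energy p (vectorField p) = 0 := by
  have h := ((hasFDerivAt_fst (p := p)).pow 2 |>.fun_add
    ((hasFDerivAt_fst.pow 4).mul_const (4⁻¹ : ℝ))).fun_add
    ((hasFDerivAt_snd (𝕜 := ℝ) (p := p)).pow 2)
  have he : energy = fun p : ℝ × ℝ => p.1 ^ 2 + p.1 ^ 4 * 4⁻¹ + p.2 ^ 2 := by
    funext p; simp [energy, div_eq_mul_inv]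
  rw [he, h.fderiv]
  simp only [Nat.add_one_sub_one, pow_one, nsmul_eq_mul, Nat.cast_ofNat, vectorField,
    add_apply, smul_apply, ContinuousLinearMap.coe_fst',
    ContinuousLinearMap.coe_snd', smul_eq_mul]
  ring

theorem norm_le_sqrt_of_energy_le {p : ℝ × ℝ} {c : ℝ} (hp : energy p ≤ c) : ‖p‖ ≤ √c := by
  unfold energy at hp
  rw [Prod.norm_def, Real.norm_eq_abs, Real.norm_eq_abs]
  exact max_le (Real.abs_le_sqrt (by nlinarith [sq_nonneg p.2, pow_two_nonneg (p.1 ^ 2)]))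
    (Real.abs_le_sqrt (by nlinarith [pow_two_nonneg p.1, pow_two_nonneg (p.1 ^ 2)]))

theorem isBounded_energy_le (c : ℝ) : Bornology.IsBounded {p | energy p ≤ c} :=
  (isBounded_closedBall (x := 0) (r := √c)).subset fun _ hp =>
    mem_closedBall_zero_iff.2 (norm_le_sqrt_of_energy_le hp)

theorem exists_hasDerivAt (t₀ : ℝ) (p₀ : ℝ × ℝ) :
    ∃ γ : ℝ → ℝ × ℝ, γ t₀ = p₀ ∧ ∀ t, HasDerivAt γ (vectorField (γ t)) t :=
  exists_hasDerivAt_of_fderiv_apply_eq_zero contDiff_vectorField differentiable_energy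
    fderiv_energy_apply_vectorField isBounded_energy_le t₀ p₀

section Solution

variable {γ : ℝ → ℝ × ℝ} (hγ : ∀ t, HasDerivAt γ (vectorField (γ t)) t)
include hγ

theorem hasDerivAt_fst (t : ℝ) : HasDerivAt (fun t => (γ t).1) (γ t).2 t :=
  hasFDerivAt_fst.comp_hasDerivAt (f := γ) t (hγ t)

theorem hasDerivAt_snd (t : ℝ) :
    HasDerivAt (fun t => (γ t).2) (-(γ t).1 * (1 + 1 / 2 * (γ t).1 ^ 2)) t :=
  hasFDerivAt_snd.comp_hasDerivAt (f := γ) t (hγ t)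

theorem energy_eq (t s : ℝ) : energy (γ t) = energy (γ s) :=
  apply_eq_apply_of_fderiv_apply_eq_zero differentiable_energy fderiv_energy_apply_vectorField
    hγ t s

theorem hasDerivAt_neg (t : ℝ) : HasDerivAt (fun t => -γ t) (vectorField (-γ t)) t := by
  rw [vectorField_neg]
  exact (hγ t).neg

theorem hasDerivAt_reflect (a s : ℝ) :
    HasDerivAt (fun s => ((γ (a - s)).1, -(γ (a - s)).2))
      (vectorField ((γ (a - s)).1, -(γ (a - s)).2)) s := by
  have hrev : HasDerivAt (fun s => a - s) (-1) s := by simpa using (hasDerivAt_id s).const_sub a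
  convert ((hasDerivAt_fst hγ (a - s)).comp s hrev).prodMk
    ((hasDerivAt_snd hγ (a - s)).comp s hrev).neg using 1
  · rfl
  · simp only [vectorField]
    congr 1 <;> ring

theorem not_forall_snd_pos (c : ℝ) : ¬ ∀ t, c ≤ t → 0 < (γ t).2 := by
  intro hpos
  by_cases hx : ∃ t₁, c ≤ t₁ ∧ 0 < (γ t₁).1
  · obtain ⟨t₁, hct₁, hx₁⟩ := hx
    have hmono : MonotoneOn (fun t => (γ t).1) (Ici c) :=
      monotoneOn_of_hasDerivWithinAt_nonneg (convex_Ici c)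
        (HasDerivAt.continuousOn fun t _ => hasDerivAt_fst hγ t)
        (fun t _ => (hasDerivAt_fst hγ t).hasDerivWithinAt)
        (fun t ht => (hpos t (interior_subset ht)).le)
    -- Beyond `t₁` the restoring force is at least `(γ t₁).1`, so the velocity must turn negative.
    obtain ⟨t, ht₁t, hneg⟩ := exists_lt_zero_of_hasDerivAt_le_neg
      (fun t _ => hasDerivAt_snd hγ t) hx₁ fun t ht => by
        have := hmono hct₁ (hct₁.trans ht) ht
        nlinarith [sq_nonneg (γ t).1]
    exact (hpos t (hct₁.trans ht₁t)).not_gt hneg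
  · push Not at hx
    have hmono : MonotoneOn (fun t => (γ t).2) (Ici c) :=
      monotoneOn_of_hasDerivWithinAt_nonneg (convex_Ici c)
        (HasDerivAt.continuousOn fun t _ => hasDerivAt_snd hγ t)
        (fun t _ => (hasDerivAt_snd hγ t).hasDerivWithinAt)
        (fun t ht => by nlinarith [hx t (interior_subset ht), sq_nonneg (γ t).1])
    -- Otherwise the position stays `≤ 0` while its speed stays `≥ (γ c).2 > 0`.
    obtain ⟨t, hct, hneg⟩ := exists_lt_zero_of_hasDerivAt_le_neg
      (fun t _ => (hasDerivAt_fst hγ t).neg) (hpos c le_rfl) fun t ht =>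
        neg_le_neg (hmono self_mem_Ici ht ht)
    simp only [Pi.neg_apply, neg_lt_zero] at hneg
    linarith [hx t hct]

theorem exists_snd_eq_zero (c : ℝ) : ∃ a, c ≤ a ∧ (γ a).2 = 0 := by
  by_contra! h
  have hcont : Continuous fun t => (γ t).2 :=
    continuous_iff_continuousAt.2 fun t => (hasDerivAt_snd hγ t).continuousAt
  rcases (h c le_rfl).lt_or_gt with hneg | hpos
  · refine not_forall_snd_pos (hasDerivAt_neg hγ) c fun t hct => ?_
    by_contra! hle
    obtain ⟨a, ha, hya⟩ := intermediate_value_Icc hct hcont.continuousOn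
      ⟨hneg.le, by simpa using hle⟩
    exact h a ha.1 hya
  · refine not_forall_snd_pos hγ c fun t hct => ?_
    by_contra! hle
    obtain ⟨a, ha, hya⟩ := intermediate_value_Icc' hct hcont.continuousOn ⟨hle, hpos.le⟩
    exact h a ha.1 hya

theorem fst_sub_eq_of_snd_eq_zero {a : ℝ} (ha : (γ a).2 = 0) (s : ℝ) :
    (γ (2 * a - s)).1 = (γ s).1 := by
  have hsymm := contDiff_vectorField.eqOn_of_hasDerivAt ordConnected_univ
    (fun s _ => hasDerivAt_reflect hγ (2 * a) s) (fun s _ => hγ s) (mem_univ a)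
    (by ext <;> simp [two_mul, ha]) (mem_univ s)
  simpa using congrArg Prod.fst hsymm

theorem periodic_fst_of_snd_eq_zero {a b : ℝ} (ha : (γ a).2 = 0) (hb : (γ b).2 = 0) :
    Function.Periodic (fun t => (γ t).1) (2 * (b - a)) := fun s => by
  calc (γ (s + 2 * (b - a))).1 = (γ (2 * b - (2 * a - s))).1 := by ring_nf
    _ = (γ s).1 := by rw [fst_sub_eq_of_snd_eq_zero hγ hb, fst_sub_eq_of_snd_eq_zero hγ ha]

end Solution

end Duffing

/-- Every (local) solution of `𝓗'' = −𝓗(1 + (1/2)𝓗²)` is bounded, extends to a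
solution defined on all of `ℝ`, and if nonconstant it is periodic. -/
theorem stmt15 (I : Set ℝ) (hI : IsOpen I) (hI' : Convex ℝ I)
    (t₀ : ℝ) (ht₀ : t₀ ∈ I)
    (h : ℝ → ℝ) (hh : ContDiffOn ℝ 2 h I)
    (hode : ∀ s ∈ I, deriv (deriv h) s = -h s * (1 + (1 / 2) * (h s) ^ 2)) :
    ∃ 𝓗 : ℝ → ℝ, ContDiff ℝ 2 𝓗
      ∧ (∀ s : ℝ, deriv (deriv 𝓗) s = -𝓗 s * (1 + (1 / 2) * (𝓗 s) ^ 2))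
      ∧ (∀ s ∈ I, 𝓗 s = h s)
      ∧ (∃ M : ℝ, ∀ s : ℝ, |𝓗 s| ≤ M)
      ∧ ((¬ ∃ c : ℝ, ∀ s : ℝ, 𝓗 s = c) → ∃ T > (0 : ℝ), Function.Periodic 𝓗 T) := by
  have hsol (s : ℝ) (hs : s ∈ I) :
      HasDerivAt (fun s => (h s, deriv h s)) (Duffing.vectorField (h s, deriv h s)) s := by
    have h₁ : HasDerivAt h (deriv h s) s :=
      ((hh.differentiableOn (by norm_num)).differentiableAt (hI.mem_nhds hs)).hasDerivAt
    have h₂ : HasDerivAt (deriv h) (deriv (deriv h) s) s :=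
      (((hh.deriv_of_isOpen (m := 1) hI (by norm_num)).differentiableOn
        (by norm_num)).differentiableAt (hI.mem_nhds hs)).hasDerivAt
    simpa [Duffing.vectorField, hode s hs] using h₁.prodMk h₂
  obtain ⟨γ, hγ₀, hγ⟩ := Duffing.exists_hasDerivAt t₀ (h t₀, deriv h t₀)
  have hγI : EqOn γ (fun s => (h s, deriv h s)) I :=
    Duffing.contDiff_vectorField.eqOn_of_hasDerivAt hI'.ordConnected (fun s _ => hγ s) hsol ht₀
      hγ₀
  have hderiv : deriv (fun t => (γ t).1) = fun t => (γ t).2 :=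
    funext fun t => (Duffing.hasDerivAt_fst hγ t).deriv
  obtain ⟨a, -, ha⟩ := Duffing.exists_snd_eq_zero hγ 0
  obtain ⟨b, hab, hb⟩ := Duffing.exists_snd_eq_zero hγ (a + 1)
  refine ⟨fun t => (γ t).1, contDiff_fst.comp (contDiff_of_hasDerivAt (n := 1)
      Duffing.contDiff_vectorField hγ), fun s => ?_, fun s hs => congrArg Prod.fst (hγI hs),
    ⟨√(Duffing.energy (γ t₀)), fun s => ?_⟩,
    fun _ => ⟨2 * (b - a), by linarith, Duffing.periodic_fst_of_snd_eq_zero hγ ha hb⟩⟩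
  · rw [hderiv]
    exact (Duffing.hasDerivAt_snd hγ s).deriv
  · calc |(γ s).1| ≤ ‖γ s‖ := norm_fst_le (γ s)
      _ ≤ _ := Duffing.norm_le_sqrt_of_energy_le (Duffing.energy_eq hγ s t₀).le
end

section
/- If u is harmonic on the punctured disk D₁∖{0} ⊂ ℝ² = ℂ, then u(z) = Re(h(z)) + c·log|z| for some holomorphic function h on D₁∖{0} and some real constant c. -/
open Complex Metric Set Filter Topology InnerProductSpace Laplacian Function.Periodic
open scoped Real

/-!
Pull back along `q z = exp (i z)`, which maps the upper half-plane `ℍ` onto the punctured disk.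
Since `u` is harmonic, `f = ∂u/∂x - i ∂u/∂y` is holomorphic, so `(f ∘ q) q'` has a primitive `P`
on `ℍ` (an increasing union of discs, on each of which it has one), and `Re P - u ∘ q` is
constant. Then `P (z + 2π) - P z` is a constant `D`, purely imaginary because `u ∘ q` is
`2π`-periodic. Writing `D = 2π i c`, the function `P z - i c z` is `2π`-periodic, so it descends to
a holomorphic `h` on the punctured disk, and `Im z = -log ‖q z‖` turns `Re (- i c z)` into
`c log ‖q z‖`.
-/

local notation "𝕢" => qParam

theorem ball_mul_I_subset_upperHalfPlane (r : ℝ) : ball (r * I) r ⊆ {z : ℂ | 0 < z.im} := by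
  intro z hz
  have := (abs_im_le_norm (z - r * I)).trans_lt (mem_ball_iff_norm.mp hz)
  norm_num at this
  exact show 0 < z.im by linarith [(abs_lt.mp this).1]

theorem iUnion_ball_mul_I_eq_upperHalfPlane :
    ⋃ n : ℕ, ball (((n + 1 : ℝ) : ℂ) * I) (n + 1) = {z : ℂ | 0 < z.im} := by
  refine Subset.antisymm (iUnion_subset fun n => ball_mul_I_subset_upperHalfPlane _) ?_
  intro z (hz : 0 < z.im)
  obtain ⟨n, hn⟩ := exists_nat_gt (normSq z / (2 * z.im))
  refine mem_iUnion.mpr ⟨n, ?_⟩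
  rw [mem_ball_iff_norm, norm_def, Real.sqrt_lt' (by positivity)]
  rw [div_lt_iff₀ (by positivity)] at hn
  simp only [normSq_apply, sub_re, sub_im, mul_re, mul_im, ofReal_re, ofReal_im, I_re, I_im] at hn ⊢
  nlinarith

theorem monotone_ball_mul_I : Monotone fun n : ℕ => ball (((n + 1 : ℝ) : ℂ) * I) (n + 1) := by
  refine monotone_nat_of_le_succ fun n => ball_subset_ball' ?_
  push_cast
  rw [dist_eq, ← sub_mul, norm_mul, norm_I, mul_one]
  norm_num

section Primitive

variable {E : Type*} [NormedAddCommGroup E] [NormedSpace ℂ E] {f : ℂ → E}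

theorem Complex.IsExactOn.iUnion_of_monotone {U : ℕ → Set ℂ} (hmono : Monotone U)
    (hopen : ∀ n, IsOpen (U n)) (hconn : ∀ n, IsPreconnected (U n)) {x₀ : ℂ} (hx₀ : x₀ ∈ U 0)
    (hf : ∀ n, IsExactOn f (U n)) : IsExactOn f (⋃ n, U n) := by
  choose F hF₀ hF using fun n => (hf n).with_val_at x₀ 0
  have hdiff (n : ℕ) : DifferentiableOn ℂ (F n) (U n) :=
    fun x hx => (hF n x hx).differentiableAt.differentiableWithinAt
  have hagree {m n : ℕ} (hmn : m ≤ n) : EqOn (F m) (F n) (U m) :=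
    (hopen m).eqOn_of_deriv_eq (hconn m) (hdiff m) ((hdiff n).mono (hmono hmn))
      (fun x hx => by rw [(hF m x hx).deriv, (hF n x (hmono hmn hx)).deriv])
      (hmono (Nat.zero_le m) hx₀) (by rw [hF₀, hF₀])
  classical
  let N (z : ℂ) : ℕ := if h : ∃ n, z ∈ U n then h.choose else 0
  have hN {z : ℂ} (hz : z ∈ ⋃ n, U n) : z ∈ U (N z) := by
    rw [mem_iUnion] at hz
    simpa only [N, dif_pos hz] using hz.choose_spec
  refine ⟨fun z => F (N z) z, fun z hz => ?_⟩
  have hloc : ∀ y ∈ U (N z), F (N y) y = F (N z) y := fun y hy =>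
    (le_total (N y) (N z)).elim (fun h => hagree h (hN (mem_iUnion_of_mem _ hy)))
      (fun h => (hagree h hy).symm)
  exact (hF _ z (hN hz)).congr_of_eventuallyEq (eventually_of_mem ((hopen _).mem_nhds (hN hz)) hloc)

theorem DifferentiableOn.isExactOn_upperHalfPlane [CompleteSpace E]
    (hf : DifferentiableOn ℂ f {z | 0 < z.im}) : IsExactOn f {z | 0 < z.im} := by
  rw [← iUnion_ball_mul_I_eq_upperHalfPlane] at hf ⊢
  refine IsExactOn.iUnion_of_monotone monotone_ball_mul_I (fun _ => isOpen_ball)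
    (fun _ => (convex_ball _ _).isPreconnected) (x₀ := I) (by simp)
    fun n => (hf.mono (subset_iUnion _ n)).isExactOn_ball

theorem exists_add_period_eq_add {F : ℂ → E} {U : Set ℂ} {p : ℂ} (hU : IsOpen U)
    (hconn : IsPreconnected U) (hUp : ∀ z ∈ U, z + p ∈ U) (hf : ∀ z ∈ U, f (z + p) = f z)
    (hF : ∀ z ∈ U, HasDerivAt F (f z) z) : ∃ D, ∀ z ∈ U, F (z + p) = F z + D := by
  have hFp (z : ℂ) (hz : z ∈ U) : HasDerivAt (fun w => F (w + p)) (f z) z := by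
    simpa [hf z hz] using (hF _ (hUp z hz)).comp_add_const z p
  exact hU.exists_eq_add_of_deriv_eq hconn
    (fun z hz => (hFp z hz).differentiableAt.differentiableWithinAt)
    (fun z hz => (hF z hz).differentiableAt.differentiableWithinAt)
    (fun z hz => by rw [(hFp z hz).deriv, (hF z hz).deriv])

end Primitive

theorem periodic_qParam (h : ℝ) : Function.Periodic (𝕢 h) h := fun z => by
  rcases eq_or_ne h 0 with rfl | hh
  · simp [qParam]
  · rw [qParam, qParam, mul_add, add_div, mul_div_assoc (2 * π * I : ℂ) (h : ℂ),
      div_self (ofReal_ne_zero.mpr hh), mul_one, exp_add, exp_two_pi_mul_I, mul_one]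

theorem hasDerivAt_qParam (h : ℝ) (z : ℂ) : HasDerivAt (𝕢 h) (𝕢 h z * (2 * π * I / h)) z := by
  have := (((hasDerivAt_id z).const_mul (2 * π * I : ℂ)).div_const (h : ℂ)).cexp
  simp only [id, mul_one] at this
  exact this

theorem qParam_mem_ball_diff {h : ℝ} (hh : 0 < h) {z : ℂ} (hz : 0 < z.im) :
    𝕢 h z ∈ ball (0 : ℂ) 1 \ {0} := by
  simpa using ⟨norm_qParam_lt_one hh hz, qParam_ne_zero z⟩

theorem im_invQParam_pos {h : ℝ} (hh : 0 < h) {q : ℂ} (hq : q ∈ ball (0 : ℂ) 1 \ {0}) :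
    0 < (invQParam h q).im := by
  obtain ⟨hq1, hq0⟩ : ‖q‖ < 1 ∧ q ≠ 0 := by simpa using hq
  rw [im_invQParam]
  exact mul_pos_of_neg_of_neg (div_neg_of_neg_of_pos (neg_lt_zero.mpr hh) (by positivity))
    (Real.log_neg (norm_pos_iff.mpr hq0) hq1)

theorem exists_differentiableOn_comp_qParam_eq {h : ℝ} (hh : 0 < h) {F : ℂ → ℂ}
    (hF : DifferentiableOn ℂ F {z | 0 < z.im}) (hper : ∀ z, 0 < z.im → F (z + h) = F z) :
    ∃ G : ℂ → ℂ, DifferentiableOn ℂ G (ball 0 1 \ {0}) ∧ ∀ z, 0 < z.im → G (𝕢 h z) = F z := by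
  -- `cuspFunction` needs a period on all of `ℂ`, so `F` is cut off outside the half-plane.
  let F' (z : ℂ) : ℂ := if 0 < z.im then F z else 0
  have hper' : Function.Periodic F' h := fun z => by
    by_cases hz : 0 < z.im <;> simp [F', hz, hper]
  refine ⟨cuspFunction h F', fun q hq => ?_, fun z hz => ?_⟩
  · have hU : {z : ℂ | 0 < z.im} ∈ 𝓝 (invQParam h q) :=
      (isOpen_lt continuous_const continuous_im).mem_nhds (im_invQParam_pos hh hq)
    have hF' : DifferentiableAt ℂ F' (invQParam h q) :=
      (hF.differentiableAt hU).congr_of_eventuallyEq (eventually_of_mem hU fun z hz => if_pos hz)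
    rw [← qParam_right_inv hh.ne' (by simpa using hq.2 : q ≠ 0)]
    exact (differentiableAt_cuspFunction hh.ne' hper' hF').differentiableWithinAt
  · rw [eq_cuspFunction hh.ne' hper']
    exact if_pos hz

noncomputable def complexPartial (u : ℂ → ℝ) (z : ℂ) : ℂ := fderiv ℝ u z 1 - I * fderiv ℝ u z I

theorem fderiv_apply_eq_re_complexPartial_mul (u : ℂ → ℝ) (z v : ℂ) :
    fderiv ℝ u z v = (complexPartial u z * v).re := by
  have hv : v = v.re • (1 : ℂ) + v.im • I := by simp [re_add_im]
  rw [hv, map_add, map_smul, map_smul]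
  simp [complexPartial]
  ring

theorem hasFDerivAt_re_sub_comp_eq_zero {u : ℂ → ℝ} {P q : ℂ → ℂ} {z q' : ℂ}
    (hu : DifferentiableAt ℝ u (q z)) (hq : HasDerivAt q q' z)
    (hP : HasDerivAt P (complexPartial u (q z) * q') z) :
    HasFDerivAt (fun w => (P w).re - u (q w)) (0 : ℂ →L[ℝ] ℝ) z := by
  have h := (reCLM.hasFDerivAt.comp z (hP.hasFDerivAt.restrictScalars ℝ)).sub
    (hu.hasFDerivAt.comp z (hq.hasFDerivAt.restrictScalars ℝ))
  refine h.congr_fderiv (ContinuousLinearMap.ext fun v => ?_)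
  simp [fderiv_apply_eq_re_complexPartial_mul u (q z), mul_comm, mul_left_comm]

theorem laplacian_eq_fderiv_fderiv_complexPlane {u : ℂ → ℝ} {z : ℂ} (hu : ContDiffAt ℝ 2 u z) :
    Δ u z = fderiv ℝ (fun w => fderiv ℝ u w 1) z 1
      + fderiv ℝ (fun w => fderiv ℝ u w I) z I := by
  have hd : DifferentiableAt ℝ (fderiv ℝ u) z :=
    (hu.fderiv_right (m := 1) (by norm_num)).differentiableAt (by norm_num)
  simp only [laplacian_eq_iteratedFDeriv_complexPlane, iteratedFDeriv_two_apply]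
  rw [fderiv_clm_apply hd (differentiableAt_const _),
    fderiv_clm_apply hd (differentiableAt_const _)]
  simp

theorem harmonicOnNhd_of_fderiv_fderiv_complexPlane {u : ℂ → ℝ} {s : Set ℂ} (hs : IsOpen s)
    (hu : ContDiffOn ℝ 2 u s)
    (hΔ : ∀ z ∈ s, fderiv ℝ (fun w => fderiv ℝ u w 1) z 1
      + fderiv ℝ (fun w => fderiv ℝ u w I) z I = 0) :
    HarmonicOnNhd u s := fun z hz =>
  ⟨hu.contDiffAt (hs.mem_nhds hz), by
    filter_upwards [hs.mem_nhds hz] with w hw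
    rw [laplacian_eq_fderiv_fderiv_complexPlane (hu.contDiffAt (hs.mem_nhds hw))]
    exact hΔ w hw⟩

theorem InnerProductSpace.HarmonicOnNhd.exists_re_eq_comp_qParam {u : ℂ → ℝ}
    (hu : HarmonicOnNhd u (ball 0 1 \ {0})) :
    ∃ P : ℂ → ℂ, DifferentiableOn ℂ P {z | 0 < z.im} ∧
      (∃ D, ∀ z, 0 < z.im → P (z + (2 * π : ℝ)) = P z + D) ∧
      ∀ z, 0 < z.im → (P z).re = u (𝕢 (2 * π) z) := by
  set U : Set ℂ := {z | 0 < z.im}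
  have hU_open : IsOpen U := isOpen_lt continuous_const continuous_im
  have hU_conn : IsPreconnected U := (convex_halfSpace_im_gt 0).isPreconnected
  have hq (z : ℂ) (hz : z ∈ U) := qParam_mem_ball_diff (h := 2 * π) (by positivity) hz
  let φ (z : ℂ) : ℂ := complexPartial u (𝕢 (2 * π) z) * (𝕢 (2 * π) z * (2 * π * I / (2 * π : ℝ)))
  have hφ : DifferentiableOn ℂ φ U := fun z hz =>
    (((HarmonicAt.differentiableAt_complex_partial (hu _ (hq z hz))).comp z
      (differentiable_qParam z)).mul ((differentiable_qParam z).mul_const _)).differentiableWithinAt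
  obtain ⟨P, hP⟩ := hφ.isExactOn_upperHalfPlane
  obtain ⟨D, hD⟩ := exists_add_period_eq_add hU_open hU_conn (p := (2 * π : ℝ))
    (fun z (hz : 0 < z.im) => by simpa [U] using hz)
    (fun z _ => by simp only [φ, periodic_qParam _ z]) hP
  have hψ (z : ℂ) (hz : z ∈ U) := hasFDerivAt_re_sub_comp_eq_zero
    ((hu _ (hq z hz)).1.differentiableAt two_ne_zero) (hasDerivAt_qParam _ z) (hP z hz)
  obtain ⟨k, hk⟩ := hU_open.exists_is_const_of_fderiv_eq_zero hU_conn
    (fun z hz => (hψ z hz).differentiableAt.differentiableWithinAt) (fun z hz => (hψ z hz).fderiv)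
  have hPd : DifferentiableOn ℂ P U :=
    fun z hz => (hP z hz).differentiableAt.differentiableWithinAt
  refine ⟨fun z => P z - k, hPd.sub_const _, ⟨D, fun z hz => by simp only [hD z hz]; ring⟩,
    fun z hz => ?_⟩
  have := hk z hz
  simp only [sub_re, ofReal_re]
  linarith

theorem InnerProductSpace.HarmonicOnNhd.exists_re_add_mul_log_norm {u : ℂ → ℝ}
    (hu : HarmonicOnNhd u (ball 0 1 \ {0})) :
    ∃ (h : ℂ → ℂ) (c : ℝ), DifferentiableOn ℂ h (ball 0 1 \ {0}) ∧
      ∀ z ∈ ball (0 : ℂ) 1 \ {0}, u z = (h z).re + c * Real.log ‖z‖ := by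
  obtain ⟨P, hP, ⟨D, hD⟩, hPre⟩ := hu.exists_re_eq_comp_qParam
  have hDre : D.re = 0 := by
    have := congrArg re (hD I (by simp))
    rw [add_re, hPre _ (by simp), hPre I (by simp), periodic_qParam] at this
    linarith
  set c := D.im / (2 * π)
  have hDc : D = (2 * π : ℝ) * (c * I) := by
    rw [← mul_assoc, ← ofReal_mul, mul_div_cancel₀ _ (by positivity)]
    conv_lhs => rw [← re_add_im D, hDre]
    simp
  obtain ⟨G, hG, hGQ⟩ := exists_differentiableOn_comp_qParam_eq (h := 2 * π) (by positivity)
    (F := fun z => P z - c * I * z) (hP.sub (by fun_prop))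
    (fun z hz => by simp only [hD z hz, hDc]; ring)
  refine ⟨G, c, hG, fun q hq => ?_⟩
  have hz := im_invQParam_pos (h := 2 * π) (by positivity) hq
  have hGq := congrArg re (hGQ _ hz)
  rw [qParam_right_inv (by positivity) (by simpa using hq.2)] at hGq
  rw [hGq, sub_re, hPre _ hz, qParam_right_inv (by positivity) (by simpa using hq.2)]
  simp [im_invQParam]

/-- If `u` is harmonic on the punctured unit disk `D₁ ∖ {0} ⊂ ℂ`, then
`u(z) = Re(h(z)) + c·log|z|` for some holomorphic `h` on `D₁ ∖ {0}` and real constant `c`. -/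
theorem stmt17 (u : ℂ → ℝ)
    (hu : ContDiffOn ℝ 2 u (ball (0 : ℂ) 1 \ {0}))
    (hharm : ∀ z ∈ ball (0 : ℂ) 1 \ {0},
      fderiv ℝ (fun w => fderiv ℝ u w 1) z 1
        + fderiv ℝ (fun w => fderiv ℝ u w Complex.I) z Complex.I = 0) :
    ∃ (h : ℂ → ℂ) (c : ℝ), DifferentiableOn ℂ h (ball (0 : ℂ) 1 \ {0})
      ∧ ∀ z ∈ ball (0 : ℂ) 1 \ {0}, u z = (h z).re + c * Real.log ‖z‖ :=
  (harmonicOnNhd_of_fderiv_fderiv_complexPlane (isOpen_ball.sdiff isClosed_singleton) hu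
    hharm).exists_re_add_mul_log_norm
end
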